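/- arXiv:0906.0447 — 9 statements merged into one kernel-verified Lean document; each statement's English description precedes it below -/
import Mathlib

section
/- Theorem (Topkis, 1979). Let G be a supermodular strategic-form game with finitely many players: for every player i the strategy set S_i is a nonempty compact subset of ℝ; each utility u_i : S_1 × ... × S_K → ℝ is upper semi-continuous; and each u_i has increasing differences, i.e., for all profiles with s_{-i} ≥ s_{-i}' (componentwise), the quantity u_i(s_i, s_{-i}) − u_i(s_i, s_{-i}') is non-decreasing in s_i. Then G possesses at least one pure-strategy Nash equilibrium. -/
open Function Set Filter Topology

/-- A usc function on a nonempty compact set attains its maximum. -/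
lemma usc_exists_max {f : ℝ → ℝ} {s : Set ℝ} (hs : IsCompact s) (hne : s.Nonempty)
    (hf : UpperSemicontinuousOn f s) : ∃ m ∈ s, ∀ x ∈ s, f x ≤ f m := by
  by_contra h
  push_neg at h
  choose y hy hlt using h
  have hU : ∀ x (hx : x ∈ s), ∃ U, IsOpen U ∧ x ∈ U ∧ ∀ z ∈ U ∩ s, f z < f (y x hx) := by
    intro x hx
    have h2 : {z | f z < f (y x hx)} ∈ 𝓝[s] x := hf x hx _ (hlt x hx)
    rcases mem_nhdsWithin.1 h2 with ⟨U, hUo, hxU, hsub⟩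
    exact ⟨U, hUo, hxU, fun z hz => hsub hz⟩
  choose U hUo hxU hUlt using hU
  obtain ⟨t, ht⟩ := hs.elim_nhds_subcover' U (fun x hx => (hUo x hx).mem_nhds (hxU x hx))
  have htne : t.Nonempty := by
    obtain ⟨x0, hx0⟩ := hne
    rcases Set.mem_iUnion₂.1 (ht hx0) with ⟨c, hc, _⟩
    exact ⟨c, hc⟩
  obtain ⟨b, hbt, hbmax⟩ := t.exists_max_image (fun x => f (y x.1 x.2)) htne
  rcases Set.mem_iUnion₂.1 (ht (hy b.1 b.2)) with ⟨c, hc, hyc⟩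
  have h1 : f (y b.1 b.2) < f (y c.1 c.2) := hUlt c.1 c.2 _ ⟨hyc, hy b.1 b.2⟩
  exact absurd (hbmax c hc) (not_le.2 h1)

/-- A usc function on a nonempty compact set has a greatest maximizer. -/
lemma usc_exists_greatest_max {f : ℝ → ℝ} {s : Set ℝ} (hs : IsCompact s) (hne : s.Nonempty)
    (hf : UpperSemicontinuousOn f s) :
    ∃ b ∈ s, (∀ x ∈ s, f x ≤ f b) ∧ ∀ x ∈ s, (∀ y ∈ s, f y ≤ f x) → x ≤ b := by
  obtain ⟨m, hm, hmax⟩ := usc_exists_max hs hne hf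
  set A : Set ℝ := {x ∈ s | f m ≤ f x} with hA
  have hAne : A.Nonempty := ⟨m, hm, le_rfl⟩
  have hAs : A ⊆ s := fun x hx => hx.1
  have hAbdd : BddAbove A := hs.bddAbove.mono hAs
  set b := sSup A with hb
  have hbcl : b ∈ closure A := csSup_mem_closure hAne hAbdd
  have hbs : b ∈ s := hs.isClosed.closure_subset_iff.2 hAs hbcl
  have hfb : f m ≤ f b := by
    by_contra hlt
    push_neg at hlt
    have h2 : {z | f z < f m} ∈ 𝓝[s] b := hf b hbs _ hlt
    have h3 : {z | f z < f m} ∈ 𝓝[A] b := nhdsWithin_mono b hAs h2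
    have : (𝓝[A] b).NeBot := mem_closure_iff_nhdsWithin_neBot.1 hbcl
    obtain ⟨z, hz⟩ := Filter.nonempty_of_mem (Filter.inter_mem h3 self_mem_nhdsWithin)
    exact absurd hz.2.2 (not_le.2 hz.1)
  refine ⟨b, hbs, fun x hx => (hmax x hx).trans hfb, fun x hx hxmax => ?_⟩
  exact le_csSup hAbdd ⟨hx, (hmax m hm).trans (hxmax m hm)⟩


/-- **Topkis (1979).** A supermodular strategic-form game with finitely many players,
nonempty compact strategy sets `S i ⊆ ℝ`, upper semi-continuous utilities, and increasing
differences (for all profiles of the others with `s_{-i} ≥ s_{-i}'`, the difference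
`u i (s_i, s_{-i}) − u i (s_i, s_{-i}')` is non-decreasing in `s_i`) possesses at least one
pure-strategy Nash equilibrium. -/
theorem topkis_supermodular_existence
    {K : ℕ} (S : Fin K → Set ℝ)
    (u : ∀ _ : Fin K, (Fin K → ℝ) → ℝ)
    (hne : ∀ i, (S i).Nonempty)
    (hcomp : ∀ i, IsCompact (S i))
    (husc : ∀ i, UpperSemicontinuousOn (u i) (Set.univ.pi S))
    (hincdiff : ∀ i, ∀ t ∈ Set.univ.pi S, ∀ t' ∈ Set.univ.pi S,
      (∀ j, j ≠ i → t' j ≤ t j) →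
      ∀ x ∈ S i, ∀ x' ∈ S i, x ≤ x' →
        u i (Function.update t i x) - u i (Function.update t' i x) ≤
        u i (Function.update t i x') - u i (Function.update t' i x')) :
    ∃ s ∈ Set.univ.pi S, ∀ i, ∀ x ∈ S i,
      u i (Function.update s i x) ≤ u i s := by
  classical
  -- membership of updates
  have hupd : ∀ s ∈ Set.univ.pi S, ∀ i, ∀ x ∈ S i,
      Function.update s i x ∈ Set.univ.pi S := by
    intro s hs i x hx j _
    rcases eq_or_ne j i with rfl | hj
    · simpa using hx
    · simpa [Function.update_apply, hj] using hs j (Set.mem_univ j)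
  -- usc of the section function
  have hsec : ∀ s ∈ Set.univ.pi S, ∀ i,
      UpperSemicontinuousOn (fun x => u i (Function.update s i x)) (S i) := by
    intro s hs i x hx y hy
    have hmem : Function.update s i x ∈ Set.univ.pi S := hupd s hs i x hx
    have h1 := husc i _ hmem y hy
    have hcont : ContinuousWithinAt (fun z : ℝ => Function.update s i z) (S i) x :=
      (continuous_const.update i continuous_id).continuousWithinAt
    have hmaps : Set.MapsTo (fun z : ℝ => Function.update s i z) (S i) (Set.univ.pi S) :=
      fun z hz => hupd s hs i z hz
    exact (hcont.tendsto_nhdsWithin hmaps).eventually h1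
  -- greatest best responses
  have hBR : ∀ s, s ∈ Set.univ.pi S → ∀ i, ∃ b ∈ S i,
      (∀ x ∈ S i, u i (Function.update s i x) ≤ u i (Function.update s i b)) ∧
      ∀ x ∈ S i, (∀ y ∈ S i, u i (Function.update s i y) ≤ u i (Function.update s i x)) →
        x ≤ b := by
    intro s hs i
    exact usc_exists_greatest_max (hcomp i) (hne i) (hsec s hs i)
  choose B hBmem hBmax hBlarge using hBR
  -- monotonicity of the greatest best response
  have hmono : ∀ s (hs : s ∈ Set.univ.pi S) t (ht : t ∈ Set.univ.pi S),
      (∀ j, s j ≤ t j) → ∀ i, B s hs i ≤ B t ht i := by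
    intro s hs t ht hst i
    set b := B s hs i
    set b' := B t ht i
    rcases le_total b b' with h | h
    · exact h
    · -- b' ≤ b ; show b is also a maximizer at t
      have hb : b ∈ S i := hBmem s hs i
      have hb' : b' ∈ S i := hBmem t ht i
      have hid := hincdiff i t ht s hs (fun j _ => hst j) b' hb' b hb h
      have h2 : u i (Function.update s i b') ≤ u i (Function.update s i b) :=
        hBmax s hs i b' hb'
      have h3 : u i (Function.update t i b') ≤ u i (Function.update t i b) := by linarith
      refine hBlarge t ht i b hb fun y hy => ?_
      exact (hBmax t ht i y hy).trans h3
  -- the set of "sub-fixed-points"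
  set P : Set (Fin K → ℝ) :=
    {s | ∃ hs : s ∈ Set.univ.pi S, ∀ i, s i ≤ B s hs i} with hP
  have hbotmem : (fun i => sInf (S i)) ∈ Set.univ.pi S :=
    fun i _ => (hcomp i).sInf_mem (hne i)
  have hPne : P.Nonempty := by
    refine ⟨_, hbotmem, fun i => csInf_le (hcomp i).bddBelow (hBmem _ hbotmem i)⟩
  set s' : Fin K → ℝ := fun i => sSup ((fun s => s i) '' P) with hs'def
  have himgne : ∀ i, ((fun s : Fin K → ℝ => s i) '' P).Nonempty := fun i => hPne.image _
  have himgsub : ∀ i, ((fun s : Fin K → ℝ => s i) '' P) ⊆ S i := by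
    rintro i x ⟨s, hsP, rfl⟩
    exact hsP.1 i (Set.mem_univ i)
  have himgbdd : ∀ i, BddAbove ((fun s : Fin K → ℝ => s i) '' P) :=
    fun i => (hcomp i).bddAbove.mono (himgsub i)
  have hs'mem : s' ∈ Set.univ.pi S := by
    intro i _
    have h1 : s' i ∈ closure ((fun s : Fin K → ℝ => s i) '' P) :=
      csSup_mem_closure (himgne i) (himgbdd i)
    exact (hcomp i).isClosed.closure_subset_iff.2 (himgsub i) h1
  have hle_s' : ∀ s ∈ P, ∀ i, s i ≤ s' i := fun s hs i =>
    le_csSup (himgbdd i) ⟨s, hs, rfl⟩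
  -- s' is a sub-fixed-point
  have hs'P : ∀ i, s' i ≤ B s' hs'mem i := by
    intro i
    refine csSup_le (himgne i) ?_
    rintro x ⟨s, hsP, rfl⟩
    obtain ⟨hs, hsub⟩ := hsP
    exact (hsub i).trans (hmono s hs s' hs'mem (hle_s' s ⟨hs, hsub⟩) i)
  -- B s' is also a sub-fixed-point, hence B s' ≤ s', hence equality
  have hBs'mem : (fun i => B s' hs'mem i) ∈ Set.univ.pi S :=
    fun i _ => hBmem s' hs'mem i
  have hBs'P : (fun i => B s' hs'mem i) ∈ P := by
    refine ⟨hBs'mem, fun i => ?_⟩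
    exact hmono s' hs'mem _ hBs'mem hs'P i
  have hfix : ∀ i, B s' hs'mem i = s' i :=
    fun i => le_antisymm (hle_s' _ hBs'P i) (hs'P i)
  refine ⟨s', hs'mem, fun i x hx => ?_⟩
  have h1 := hBmax s' hs'mem i x hx
  rwa [hfix i, Function.update_eq_self] at h1
end

section
/- Lemma (differentiable characterization of increasing differences). Let I, J ⊆ ℝ be open intervals and let u : I × J → ℝ be twice continuously differentiable. Then u has increasing differences — i.e., for all x ≤ x' in I and y ≤ y' in J, u(x', y') − u(x, y') ≥ u(x', y) − u(x, y) — if and only if the mixed second partial derivative ∂²u/∂x∂y is nonnegative everywhere on I × J. (Likewise, decreasing differences, with the inequality reversed, holds if and only if ∂²u/∂x∂y ≤ 0 everywhere.) -/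
open Set Filter Topology

private theorem aux_incr (I J : Set ℝ) (hIo : IsOpen I) (hIc : Convex ℝ I) (hJo : IsOpen J)
    (hJc : Convex ℝ J) (u : ℝ → ℝ → ℝ)
    (hu : ContDiffOn ℝ 2 (fun p : ℝ × ℝ => u p.1 p.2) (I ×ˢ J)) :
    (∀ x ∈ I, ∀ x' ∈ I, ∀ y ∈ J, ∀ y' ∈ J, x ≤ x' → y ≤ y' →
        u x' y - u x y ≤ u x' y' - u x y') ↔
      (∀ x ∈ I, ∀ y ∈ J, 0 ≤ deriv (fun x' => deriv (fun y' => u x' y') y) x) := by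
  set U : ℝ × ℝ → ℝ := fun p => u p.1 p.2 with hUdef
  have hop : IsOpen (I ×ˢ J) := hIo.prod hJo
  set G : ℝ × ℝ → ℝ := fun p => fderiv ℝ U p (0, 1) with hGdef
  -- the partial derivative in the second variable
  have F1 : ∀ x ∈ I, ∀ y ∈ J, HasDerivAt (fun y' => u x y') (G (x, y)) y := by
    intro x hx y hy
    have hd : DifferentiableAt ℝ U (x, y) :=
      (hu.contDiffAt (hop.mem_nhds (by exact ⟨hx, hy⟩))).differentiableAt (by norm_num)
    have h1 : HasDerivAt (fun y' => ((x : ℝ), y')) ((0 : ℝ), (1 : ℝ)) y :=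
      HasDerivAt.prodMk (hasDerivAt_const y x) (hasDerivAt_id y)
    exact hd.hasFDerivAt.comp_hasDerivAt y h1
  have hgd : ∀ x ∈ I, ∀ y ∈ J, deriv (fun y' => u x y') y = G (x, y) := fun x hx y hy =>
    (F1 x hx y hy).deriv
  -- G is C¹ on I ×ˢ J
  have F2 : ContDiffOn ℝ 1 G (I ×ˢ J) := by
    have := (hu.fderiv_of_isOpen hop (m := 1) (by norm_num))
    exact this.clm_apply contDiffOn_const
  -- the function x' ↦ deriv (u x') y agrees with G (·, y) on I
  have hcongr : ∀ y ∈ J, ∀ x ∈ I,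
      (fun x' => deriv (fun y' => u x' y') y) =ᶠ[𝓝 x] (fun x' => G (x', y)) := by
    intro y hy x hx
    filter_upwards [hIo.mem_nhds hx] with z hz using hgd z hz y hy
  have hGdiff : ∀ y ∈ J, ∀ x ∈ I, DifferentiableAt ℝ (fun x' => G (x', y)) x := by
    intro y hy x hx
    have : DifferentiableAt ℝ G (x, y) :=
      (F2.contDiffAt (hop.mem_nhds ⟨hx, hy⟩)).differentiableAt (by norm_num)
    exact this.comp x (by
      have h2 : DifferentiableAt ℝ (fun x' : ℝ => (x', y)) x :=
        differentiableAt_fun_id.prodMk (differentiableAt_const y)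
      exact h2)
  have hkdiff : ∀ y ∈ J, ∀ x ∈ I,
      DifferentiableAt ℝ (fun x' => deriv (fun y' => u x' y') y) x := by
    intro y hy x hx
    exact (hGdiff y hy x hx).congr_of_eventuallyEq (hcongr y hy x hx)
  constructor
  · -- increasing differences → mixed partial nonneg
    intro hinc x hx y hy
    -- first, monotonicity of x' ↦ deriv (u x' ·) y on I
    have hmono : ∀ a ∈ I, ∀ b ∈ I, a ≤ b →
        deriv (fun y' => u a y') y ≤ deriv (fun y' => u b y') y := by
      intro a ha b hb hab
      have hne : (𝓝[Ioi y ∩ J] y).NeBot := by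
        have : 𝓝[Ioi y ∩ J] y = 𝓝[Ioi y] y :=
          nhdsWithin_inter_of_mem' (mem_nhdsWithin_of_mem_nhds (hJo.mem_nhds hy))
        rw [this]; infer_instance
      have hsub : 𝓝[Ioi y ∩ J] y ≤ 𝓝[≠] y := by
        apply nhdsWithin_mono
        intro z hz
        exact ne_of_gt hz.1
      have ta : Tendsto (slope (fun y' => u a y') y) (𝓝[Ioi y ∩ J] y)
          (𝓝 (deriv (fun y' => u a y') y)) := by
        have := (hasDerivAt_iff_tendsto_slope.1 ((F1 a ha y hy).congr_deriv (hgd a ha y hy).symm))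
        exact this.mono_left hsub
      have tb : Tendsto (slope (fun y' => u b y') y) (𝓝[Ioi y ∩ J] y)
          (𝓝 (deriv (fun y' => u b y') y)) := by
        have := (hasDerivAt_iff_tendsto_slope.1 ((F1 b hb y hy).congr_deriv (hgd b hb y hy).symm))
        exact this.mono_left hsub
      refine le_of_tendsto_of_tendsto ta tb ?_
      filter_upwards [self_mem_nhdsWithin] with z hz
      have hyz : y < z := hz.1
      have := hinc a ha b hb y hy z hz.2 hab hyz.le
      rw [slope_def_field, slope_def_field]
      have h0 : (0:ℝ) < z - y := by linarith
      exact div_le_div_of_nonneg_right (by linarith) h0.le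
    -- slopes of the monotone function are nonneg, derivative is a limit of slopes
    set k : ℝ → ℝ := fun x' => deriv (fun y' => u x' y') y with hk
    have hkx : HasDerivAt k (deriv k x) x := (hkdiff y hy x hx).hasDerivAt
    have hne : (𝓝[Ioi x ∩ I] x).NeBot := by
      have : 𝓝[Ioi x ∩ I] x = 𝓝[Ioi x] x :=
        nhdsWithin_inter_of_mem' (mem_nhdsWithin_of_mem_nhds (hIo.mem_nhds hx))
      rw [this]; infer_instance
    have hsub : 𝓝[Ioi x ∩ I] x ≤ 𝓝[≠] x :=
      nhdsWithin_mono _ (fun z hz => ne_of_gt hz.1)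
    have tk : Tendsto (slope k x) (𝓝[Ioi x ∩ I] x) (𝓝 (deriv k x)) :=
      (hasDerivAt_iff_tendsto_slope.1 hkx).mono_left hsub
    refine ge_of_tendsto tk ?_
    filter_upwards [self_mem_nhdsWithin] with z hz
    rw [slope_def_field]
    have h1 : k x ≤ k z := hmono x hx z hz.2 (le_of_lt hz.1)
    exact div_nonneg (sub_nonneg.2 h1) (sub_nonneg.2 hz.1.le)
  · -- mixed partial nonneg → increasing differences
    intro hmix x hx x' hx' y hy y' hy' hxx hyy
    -- monotone in first variable of the partial derivative
    have hmono : ∀ t ∈ J, deriv (fun y' => u x y') t ≤ deriv (fun y' => u x' y') t := by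
      intro t ht
      have : MonotoneOn (fun z => deriv (fun y' => u z y') t) I := by
        apply monotoneOn_of_deriv_nonneg hIc
        · intro z hz
          exact ((hkdiff t ht z hz).continuousAt).continuousWithinAt
        · intro z hz
          rw [hIo.interior_eq] at hz
          exact (hkdiff t ht z hz).differentiableWithinAt
        · intro z hz
          rw [hIo.interior_eq] at hz
          exact hmix z hz t ht
      exact this hx hx' hxx
    -- now integrate in the second variable
    have hF : MonotoneOn (fun t => u x' t - u x t) J := by
      apply monotoneOn_of_deriv_nonneg hJc
      · intro t ht
        exact (((F1 x' hx' t ht).differentiableAt).sub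
          ((F1 x hx t ht).differentiableAt)).continuousAt.continuousWithinAt
      · intro t ht
        rw [hJo.interior_eq] at ht
        exact (((F1 x' hx' t ht).differentiableAt).sub
          ((F1 x hx t ht).differentiableAt)).differentiableWithinAt
      · intro t ht
        rw [hJo.interior_eq] at ht
        have hd : HasDerivAt (fun t => u x' t - u x t) (G (x', t) - G (x, t)) t :=
          (F1 x' hx' t ht).sub (F1 x hx t ht)
        rw [hd.deriv]
        have := hmono t ht
        rw [hgd x hx t ht, hgd x' hx' t ht] at this
        linarith
    have := hF hy hy' hyy
    simp only at this
    linarith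


/-- **Differentiable characterization of increasing differences.** Let `I, J ⊆ ℝ` be open
intervals (open convex subsets of `ℝ`) and let `u : I × J → ℝ` be twice continuously
differentiable. Then `u` has increasing differences on `I × J` iff the mixed second partial
derivative `∂²u/∂x∂y` is nonnegative everywhere on `I × J`; likewise `u` has decreasing
differences iff `∂²u/∂x∂y ≤ 0` everywhere on `I × J`. -/
theorem increasing_differences_iff_mixed_partial_nonneg
    (I J : Set ℝ) (hIo : IsOpen I) (hIc : Convex ℝ I) (hJo : IsOpen J) (hJc : Convex ℝ J)
    (u : ℝ → ℝ → ℝ)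
    (hu : ContDiffOn ℝ 2 (fun p : ℝ × ℝ => u p.1 p.2) (I ×ˢ J)) :
    ((∀ x ∈ I, ∀ x' ∈ I, ∀ y ∈ J, ∀ y' ∈ J, x ≤ x' → y ≤ y' →
        u x' y - u x y ≤ u x' y' - u x y') ↔
      (∀ x ∈ I, ∀ y ∈ J, 0 ≤ deriv (fun x' => deriv (fun y' => u x' y') y) x)) ∧
    ((∀ x ∈ I, ∀ x' ∈ I, ∀ y ∈ J, ∀ y' ∈ J, x ≤ x' → y ≤ y' →
        u x' y' - u x y' ≤ u x' y - u x y) ↔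
      (∀ x ∈ I, ∀ y ∈ J, deriv (fun x' => deriv (fun y' => u x' y') y) x ≤ 0)) := by
  constructor
  · exact aux_incr I J hIo hIc hJo hJc u hu
  · have hneg := aux_incr I J hIo hIc hJo hJc (fun x y => -u x y) hu.neg
    have hd : ∀ y x : ℝ,
        deriv (fun x' => deriv (fun y' => -u x' y') y) x
          = -deriv (fun x' => deriv (fun y' => u x' y') y) x := by
      intro y x
      have : (fun x' => deriv (fun y' => -u x' y') y)
          = fun x' => -deriv (fun y' => u x' y') y := by
        funext x'
        exact deriv.neg
      rw [this, deriv.fun_neg]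
    constructor
    · intro h x hx y hy
      rw [← neg_nonneg, ← hd y x]
      refine hneg.1 ?_ x hx y hy
      intro a ha b hb c hc d hd hab hcd
      have := h a ha b hb c hc d hd hab hcd
      simp only [neg_sub_neg]
      linarith
    · intro h x hx x' hx' y hy y' hy' hxx hyy
      have := hneg.2 ?_ x hx x' hx' y hy y' hy' hxx hyy
      · simp only [neg_sub_neg] at this
        linarith
      · intro a ha b hb
        rw [hd b a, neg_nonneg]
        exact h a ha b hb
end

section
/- Theorem (Monderer–Shapley-1, 1996). Let G be a strategic-form game with finitely many players in which every strategy set S_i is a nonempty compact metric space and every utility u_i : S_1 × ... × S_K → ℝ is continuous. If G is an exact potential game, i.e., there exists a function φ : S_1 × ... × S_K → ℝ such that for every player i, every profile s = (s_i, s_{-i}) and every s_i' ∈ S_i one has u_i(s_i, s_{-i}) − u_i(s_i', s_{-i}) = φ(s_i, s_{-i}) − φ(s_i', s_{-i}), then G possesses at least one pure-strategy Nash equilibrium. -/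
/-- **Monderer–Shapley-1 (1996).** A strategic-form game with finitely many players, each
strategy set a nonempty compact metric space, continuous utilities, and admitting an exact
potential `φ` possesses at least one pure-strategy Nash equilibrium. -/
theorem monderer_shapley_potential_existence
    {K : ℕ} (S : Fin K → Type)
    [∀ i, MetricSpace (S i)] [∀ i, CompactSpace (S i)] [∀ i, Nonempty (S i)]
    (u : ∀ _ : Fin K, (∀ j : Fin K, S j) → ℝ)
    (hcont : ∀ i, Continuous (u i))
    (φ : (∀ j : Fin K, S j) → ℝ)
    (hpot : ∀ (i : Fin K) (s : ∀ j, S j) (x : S i),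
      u i s - u i (Function.update s i x) = φ s - φ (Function.update s i x)) :
    ∃ s : ∀ j : Fin K, S j, ∀ (i : Fin K) (x : S i),
      u i (Function.update s i x) ≤ u i s := by
  classical
  have hne : Nonempty (∀ j, S j) := ⟨fun j => Classical.arbitrary (S j)⟩
  obtain ⟨s₀⟩ := hne
  -- hybrid profiles: first n coordinates from s, the rest from s₀
  set T : ℕ → (∀ j, S j) → (∀ j, S j) :=
    fun n s j => if (j : ℕ) < n then s j else s₀ j with hT
  have hTcont : ∀ n, Continuous (T n) := by
    intro n
    apply continuous_pi
    intro j
    by_cases h : (j : ℕ) < n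
    · simpa [hT, h] using continuous_apply j
    · simpa [hT, h] using (continuous_const : Continuous fun _ : ∀ j, S j => s₀ j)
  have hupdate : ∀ (n : ℕ) (h : n < K) (s : ∀ j, S j),
      T n s = Function.update (T (n + 1) s) ⟨n, h⟩ (s₀ ⟨n, h⟩) := by
    intro n h s
    funext j
    rcases eq_or_ne j ⟨n, h⟩ with rfl | hj
    · simp [hT]
    · have hj' : (j : ℕ) ≠ n := fun hh => hj (Fin.ext hh)
      rw [Function.update_of_ne hj]
      simp only [hT]
      rcases lt_or_ge (j : ℕ) n with hlt | hge
      · simp [hlt, Nat.lt_succ_of_lt hlt]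
      · have h1 : ¬ (j : ℕ) < n := not_lt.2 hge
        have h2 : ¬ (j : ℕ) < n + 1 := by omega
        simp [h1, h2]
  have hφn : ∀ n, Continuous (fun s => φ (T n s)) := by
    intro n
    induction n with
    | zero =>
        have : (fun s => φ (T 0 s)) = fun _ => φ (T 0 s₀) := by
          funext s; simp [hT]
        rw [this]; exact continuous_const
    | succ n ih =>
        by_cases h : n < K
        · have key : ∀ s, φ (T (n + 1) s)
              = φ (T n s) + (u ⟨n, h⟩ (T (n + 1) s) - u ⟨n, h⟩ (T n s)) := by
            intro s
            have := hpot ⟨n, h⟩ (T (n + 1) s) (s₀ ⟨n, h⟩)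
            rw [← hupdate n h s] at this
            linarith
          have : (fun s => φ (T (n + 1) s))
              = fun s => φ (T n s) + (u ⟨n, h⟩ (T (n + 1) s) - u ⟨n, h⟩ (T n s)) := by
            funext s; exact key s
          rw [this]
          exact ih.add (((hcont _).comp (hTcont (n + 1))).sub ((hcont _).comp (hTcont n)))
        · have : T (n + 1) = T n := by
            funext s j
            have hj : (j : ℕ) < n ↔ (j : ℕ) < n + 1 := by
              have := j.isLt; omega
            simp only [hT]
            by_cases hh : (j : ℕ) < n
            · simp [hh, hj.mp hh]
            · have h2 : ¬ (j : ℕ) < n + 1 := fun hc => hh (hj.mpr hc)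
              simp [hh, h2]
          rw [this]; exact ih
  have hφ : Continuous φ := by
    have : φ = fun s => φ (T K s) := by
      funext s
      congr 1
      funext j
      simp [hT, j.isLt]
    rw [this]; exact hφn K
  obtain ⟨s, -, hs⟩ := isCompact_univ.exists_isMaxOn ⟨s₀, trivial⟩ hφ.continuousOn
  refine ⟨s, fun i x => ?_⟩
  have h1 := hpot i s x
  have h2 : φ (Function.update s i x) ≤ φ s := hs (Set.mem_univ _)
  linarith
end

section
/- Proposition (finite improvement property of finite potential games). Let G be a strategic-form game with finitely many players, each having a nonempty finite strategy set, and admitting an exact potential φ. Then every improvement path of G is finite, where an improvement path is a (finite or infinite) sequence of strategy profiles s^0, s^1, s^2, ... such that each s^{t+1} differs from s^t in exactly one player's coordinate, say player i_t, and u_{i_t}(s^{t+1}) > u_{i_t}(s^t). In particular, best-response dynamics in such a game terminates at a pure-strategy Nash equilibrium. -/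
/-- **Finite improvement property of finite potential games.** In a strategic-form game
with finitely many players, each having a nonempty finite strategy set, and admitting an
exact potential `φ`, every improvement path is finite: there is no infinite sequence of
strategy profiles in which each step is a unilateral deviation by a single player that
strictly increases that player's utility. -/
theorem finite_improvement_property
    {K : ℕ} (S : Fin K → Type) [∀ i, Fintype (S i)] [∀ i, Nonempty (S i)]
    (u : ∀ _ : Fin K, (∀ j : Fin K, S j) → ℝ)
    (φ : (∀ j : Fin K, S j) → ℝ)
    (hpot : ∀ (i : Fin K) (s : ∀ j, S j) (x : S i),
      u i s - u i (Function.update s i x) = φ s - φ (Function.update s i x)) :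
    ¬ ∃ s : ℕ → ∀ j : Fin K, S j, ∀ t : ℕ, ∃ i : Fin K,
        s (t + 1) = Function.update (s t) i (s (t + 1) i) ∧
        s (t + 1) i ≠ s t i ∧
        u i (s t) < u i (s (t + 1)) := by
  rintro ⟨s, hs⟩
  have hstep : ∀ t, φ (s t) < φ (s (t + 1)) := by
    intro t
    obtain ⟨i, heq, _, hlt⟩ := hs t
    have hback : Function.update (s (t + 1)) i (s t i) = s t := by
      rw [heq]
      simp [Function.update_idem]
    have := hpot i (s (t + 1)) (s t i)
    rw [hback] at this
    linarith
  have hmono : StrictMono (fun t => φ (s t)) := strictMono_nat_of_lt_succ hstep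
  have hinj : Function.Injective s := fun a b hab => hmono.injective (by simp [hab])
  obtain ⟨a, b, hne, heq⟩ := Finite.exists_ne_map_eq_of_infinite s
  exact hne (hinj heq)
end

section
/- Theorem (Monderer–Shapley-2, 1996). Let G be a strategic-form game with finitely many players in which every strategy set S_i is an open interval of ℝ and every utility u_i : S_1 × ... × S_K → ℝ is twice continuously differentiable. Then G is an exact potential game (i.e., admits a function φ with u_i(s_i, s_{-i}) − u_i(s_i', s_{-i}) = φ(s_i, s_{-i}) − φ(s_i', s_{-i}) for all i, s, s_i') if and only if for every pair of players (i, j), ∂²(u_i − u_j)/∂s_i∂s_j = 0 identically, i.e., ∂²u_i/∂s_i∂s_j = ∂²u_j/∂s_i∂s_j everywhere on S_1 × ... × S_K. -/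
/-- Partial derivative of a function of a strategy profile with respect to the `k`-th
player's (real) strategy. -/
noncomputable def pder {K : ℕ} (k : Fin K) (f : (Fin K → ℝ) → ℝ) (s : Fin K → ℝ) : ℝ :=
  deriv (fun x : ℝ => f (Function.update s k x)) (s k)

open Function Filter Set

/-- evaluation of the full derivative in the direction of coordinate `k` -/
noncomputable def Vd {K : ℕ} (k : Fin K) (f : (Fin K → ℝ) → ℝ) (s : Fin K → ℝ) : ℝ :=
  fderiv ℝ f s (Pi.single k 1)

lemma hasDerivAt_comp_update {K : ℕ} {f : (Fin K → ℝ) → ℝ} {s : Fin K → ℝ} (i : Fin K)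
    (hf : DifferentiableAt ℝ f s) :
    HasDerivAt (fun x : ℝ => f (Function.update s i x)) (Vd i f s) (s i) := by
  have hL : (fun x : ℝ => Function.update s i x) = fun x : ℝ => s + (x - s i) • (Pi.single i 1 : Fin K → ℝ) := by
    funext x; funext l
    by_cases h : l = i
    · subst h; simp
    · simp [Function.update_of_ne h, Pi.single_apply, h]
  have h1 : HasDerivAt (fun x : ℝ => Function.update s i x) (Pi.single i 1) (s i) := by
    rw [hL]
    simpa using
      ((((hasDerivAt_id (s i)).sub_const (s i)).smul_const (Pi.single i 1 : Fin K → ℝ)).const_add s)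
  have := HasFDerivAt.comp_hasDerivAt (s i) (by simpa [Function.update_eq_self] using hf.hasFDerivAt) h1
  exact this

lemma pder_eq_Vd {K : ℕ} {f : (Fin K → ℝ) → ℝ} {s : Fin K → ℝ} (i : Fin K)
    (hf : DifferentiableAt ℝ f s) : pder i f s = Vd i f s :=
  (hasDerivAt_comp_update i hf).deriv

lemma continuous_comp_update {K : ℕ} (s : Fin K → ℝ) (i : Fin K) :
    Continuous fun x : ℝ => Function.update s i x :=
  continuous_const.update i continuous_id

lemma pder_congr {K : ℕ} {f g : (Fin K → ℝ) → ℝ} {s : Fin K → ℝ} (j : Fin K)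
    (h : f =ᶠ[nhds s] g) : pder j f s = pder j g s := by
  have ht : Filter.Tendsto (fun x : ℝ => Function.update s j x) (nhds (s j)) (nhds s) := by
    have := (continuous_comp_update s j).tendsto (s j)
    simpa [Function.update_eq_self] using this
  exact Filter.EventuallyEq.deriv_eq (h.comp_tendsto ht)

lemma mem_pi_update {K : ℕ} {S : Fin K → Set ℝ} {s : Fin K → ℝ} {i : Fin K} {x : ℝ}
    (hs : s ∈ Set.univ.pi S) (hx : x ∈ S i) : Function.update s i x ∈ Set.univ.pi S := by
  rw [Set.mem_univ_pi] at hs ⊢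
  intro l
  by_cases h : l = i
  · subst h; simpa
  · simpa [Function.update_of_ne h] using hs l

section
variable {K : ℕ} {S : Fin K → Set ℝ}

lemma isOpen_pi' (hop : ∀ i, IsOpen (S i)) : IsOpen (Set.univ.pi S) :=
  isOpen_set_pi Set.finite_univ (fun a _ => hop a)

lemma diffAt_of_C2 (hop : ∀ i, IsOpen (S i)) {f : (Fin K → ℝ) → ℝ} (hf : ContDiffOn ℝ 2 f (Set.univ.pi S))
    {s : Fin K → ℝ} (hs : s ∈ Set.univ.pi S) : DifferentiableAt ℝ f s := by
  have := hf.contDiffAt ((isOpen_pi' hop).mem_nhds hs)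
  exact this.differentiableAt (by norm_num)

lemma diffAt_Vd (hop : ∀ i, IsOpen (S i)) {f : (Fin K → ℝ) → ℝ} (hf : ContDiffOn ℝ 2 f (Set.univ.pi S))
    {s : Fin K → ℝ} (hs : s ∈ Set.univ.pi S) (k : Fin K) :
    DifferentiableAt ℝ (Vd k f) s := by
  have h2 : ContDiffAt ℝ 2 f s := hf.contDiffAt ((isOpen_pi' hop).mem_nhds hs)
  have h1 : ContDiffAt ℝ 1 (fderiv ℝ f) s := h2.fderiv_right (by norm_num)
  exact (h1.differentiableAt (by norm_num)).clm_apply (differentiableAt_const _)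

lemma pder_eventuallyEq_Vd (hop : ∀ i, IsOpen (S i)) {f : (Fin K → ℝ) → ℝ} (hf : ContDiffOn ℝ 2 f (Set.univ.pi S))
    {s : Fin K → ℝ} (hs : s ∈ Set.univ.pi S) (k : Fin K) :
    pder k f =ᶠ[nhds s] Vd k f := by
  filter_upwards [(isOpen_pi' hop).mem_nhds hs] with p hp
  exact pder_eq_Vd k (diffAt_of_C2 hop hf hp)

lemma pder_pder_eq (hop : ∀ i, IsOpen (S i)) {f : (Fin K → ℝ) → ℝ} (hf : ContDiffOn ℝ 2 f (Set.univ.pi S))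
    {s : Fin K → ℝ} (hs : s ∈ Set.univ.pi S) (a b : Fin K) :
    pder a (pder b f) s = fderiv ℝ (Vd b f) s (Pi.single a 1) := by
  rw [pder_congr a (pder_eventuallyEq_Vd hop hf hs b)]
  exact (hasDerivAt_comp_update a (diffAt_Vd hop hf hs b)).deriv

end

lemma const_of_hasDerivAt_zero {T : Set ℝ} (hT : Convex ℝ T) {g : ℝ → ℝ}
    (hg : ∀ y ∈ T, HasDerivAt g 0 y) {a c : ℝ} (ha : a ∈ T) (hc : c ∈ T) : g a = g c := by
  have := Convex.norm_image_sub_le_of_norm_hasDerivWithin_le (𝕜 := ℝ)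
    (f := g) (f' := fun _ => 0) (C := 0)
    (fun x hx => (hg x hx).hasDerivWithinAt) (fun x _ => by simp) hT ha hc
  have h0 : ‖g c - g a‖ ≤ 0 := by simpa using this
  have := norm_nonneg (g c - g a)
  have : g c - g a = 0 := by
    have := le_antisymm h0 (norm_nonneg _)
    exact norm_eq_zero.mp this
  linarith [this]

lemma double_diff_eq {K : ℕ} {S : Fin K → Set ℝ}
    (hop : ∀ i, IsOpen (S i)) (hcv : ∀ i, Convex ℝ (S i))
    {f g : (Fin K → ℝ) → ℝ}
    (hf : ContDiffOn ℝ 2 f (Set.univ.pi S)) (hg : ContDiffOn ℝ 2 g (Set.univ.pi S))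
    {i k : Fin K} (hik : i ≠ k)
    (hW : ∀ r ∈ Set.univ.pi S,
      fderiv ℝ (Vd k f) r (Pi.single i 1) = fderiv ℝ (Vd k g) r (Pi.single i 1))
    {w : Fin K → ℝ} (hw : w ∈ Set.univ.pi S) {x : ℝ} (hx : x ∈ S i) {y : ℝ} (hy : y ∈ S k) :
    f (update w k y) - f (update (update w k y) i x) - f w + f (update w i x)
    = g (update w k y) - g (update (update w k y) i x) - g w + g (update w i x) := by
  set F : ℝ → ℝ := fun y' => f (update w k y') - f (update (update w k y') i x)
      - g (update w k y') + g (update (update w k y') i x) with hF_def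
  have hF0 : ∀ y' ∈ S k, HasDerivAt F 0 y' := by
    intro y' hy'
    set p := update w k y' with hp_def
    have hp : p ∈ Set.univ.pi S := mem_pi_update hw hy'
    set q := update p i x with hq_def
    have hq : q ∈ Set.univ.pi S := mem_pi_update hp hx
    have hpk : p k = y' := Function.update_self _ _ _
    have hqk : q k = y' := by rw [hq_def, Function.update_of_ne (Ne.symm hik)]; exact hpk
    have hup : ∀ t : ℝ, update p k t = update w k t := fun t => Function.update_idem _ _ _
    have huq : ∀ t : ℝ, update q k t = update (update w k t) i x := by
      intro t
      rw [hq_def, Function.update_comm hik, hp_def, Function.update_idem]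
    have h1 : HasDerivAt (fun t => f (update w k t)) (Vd k f p) y' := by
      have := hasDerivAt_comp_update k (diffAt_of_C2 hop hf hp)
      rw [hpk] at this; exact this.congr_of_eventuallyEq (by filter_upwards with t; rw [hup])
    have h2 : HasDerivAt (fun t => f (update (update w k t) i x)) (Vd k f q) y' := by
      have := hasDerivAt_comp_update k (diffAt_of_C2 hop hf hq)
      rw [hqk] at this; exact this.congr_of_eventuallyEq (by filter_upwards with t; rw [huq])
    have h3 : HasDerivAt (fun t => g (update w k t)) (Vd k g p) y' := by
      have := hasDerivAt_comp_update k (diffAt_of_C2 hop hg hp)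
      rw [hpk] at this; exact this.congr_of_eventuallyEq (by filter_upwards with t; rw [hup])
    have h4 : HasDerivAt (fun t => g (update (update w k t) i x)) (Vd k g q) y' := by
      have := hasDerivAt_comp_update k (diffAt_of_C2 hop hg hq)
      rw [hqk] at this; exact this.congr_of_eventuallyEq (by filter_upwards with t; rw [huq])
    have hFd : HasDerivAt F (Vd k f p - Vd k f q - Vd k g p + Vd k g q) y' :=
      ((h1.sub h2).sub h3).add h4
    -- show the derivative vanishes, via constancy in the `i` direction
    set G : ℝ → ℝ := fun t => Vd k f (update p i t) - Vd k g (update p i t) with hG_def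
    have hG0 : ∀ t ∈ S i, HasDerivAt G 0 t := by
      intro t ht
      set r := update p i t with hr_def
      have hr : r ∈ Set.univ.pi S := mem_pi_update hp ht
      have hri : r i = t := Function.update_self _ _ _
      have hur : ∀ t' : ℝ, update r i t' = update p i t' := fun t' => Function.update_idem _ _ _
      have ha : HasDerivAt (fun t' => Vd k f (update p i t'))
          (fderiv ℝ (Vd k f) r (Pi.single i 1)) t := by
        have := hasDerivAt_comp_update i (diffAt_Vd hop hf hr k)
        rw [hri] at this; exact this.congr_of_eventuallyEq (by filter_upwards with t'; rw [hur])
      have hb : HasDerivAt (fun t' => Vd k g (update p i t'))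
          (fderiv ℝ (Vd k g) r (Pi.single i 1)) t := by
        have := hasDerivAt_comp_update i (diffAt_Vd hop hg hr k)
        rw [hri] at this; exact this.congr_of_eventuallyEq (by filter_upwards with t'; rw [hur])
      have := ha.sub hb
      rw [hW r hr, sub_self] at this
      exact this
    have hpi : p i ∈ S i := by
      rw [hp_def, Function.update_of_ne hik]
      exact (Set.mem_univ_pi.mp hw) i
    have hGc : G (p i) = G x := const_of_hasDerivAt_zero (hcv i) hG0 hpi hx
    have hval : Vd k f p - Vd k f q - Vd k g p + Vd k g q = 0 := by
      have h5 : G (p i) = Vd k f p - Vd k g p := by rw [hG_def]; simp [Function.update_eq_self]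
      have h6 : G x = Vd k f q - Vd k g q := rfl
      rw [h5, h6] at hGc; linarith
    rwa [hval] at hFd
  have hwk : w k ∈ S k := (Set.mem_univ_pi.mp hw) k
  have hFc : F y = F (w k) := const_of_hasDerivAt_zero (hcv k) hF0 hy hwk
  have hFwk : F (w k) = f w - f (update w i x) - g w + g (update w i x) := by
    rw [hF_def]; simp [Function.update_eq_self]
  have hFy : F y = f (update w k y) - f (update (update w k y) i x)
      - g (update w k y) + g (update (update w k y) i x) := rfl
  rw [hFy, hFwk] at hFc
  linarith
lemma forward_dir {K : ℕ} {S : Fin K → Set ℝ}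
    (hop : ∀ i, IsOpen (S i))
    {u : ∀ _ : Fin K, (Fin K → ℝ) → ℝ}
    (hu : ∀ i, ContDiffOn ℝ 2 (u i) (Set.univ.pi S))
    {φ : (Fin K → ℝ) → ℝ}
    (hφ : ∀ i, ∀ s ∈ Set.univ.pi S, ∀ x ∈ S i,
        u i s - u i (Function.update s i x) = φ s - φ (Function.update s i x)) :
    ∀ i j : Fin K, ∀ s ∈ Set.univ.pi S,
        pder j (pder i (u i)) s = pder j (pder i (u j)) s := by
  intro i j s hs
  by_cases hij : i = j
  · subst hij; rfl
  have hsi : s i ∈ S i := (Set.mem_univ_pi.mp hs) i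
  have hsj : s j ∈ S j := (Set.mem_univ_pi.mp hs) j
  -- the double-difference identity
  have hE : ∀ y ∈ S j, ∀ x ∈ S i,
      u i (update s j y) - u i (update (update s j y) i x) - u i s + u i (update s i x)
      = u j (update s j y) - u j (update (update s j y) i x) - u j s + u j (update s i x) := by
    intro y hy x hx
    have e1 := hφ i (update s j y) (mem_pi_update hs hy) x hx
    have e2 := hφ i s hs x hx
    have e3 := hφ j (update s i x) (mem_pi_update hs hx) y hy
    have e4 := hφ j s hs y hy
    rw [Function.update_comm hij] at e3
    linarith
  -- differentiate in `x` at `s i`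
  have hstar : ∀ y ∈ S j,
      Vd i (u i) (update s j y) - Vd i (u j) (update s j y)
      = Vd i (u i) s - Vd i (u j) s := by
    intro y hy
    set t := update s j y with ht_def
    have ht : t ∈ Set.univ.pi S := mem_pi_update hs hy
    have hti : t i = s i := Function.update_of_ne hij _ _
    have hA : HasDerivAt (fun x => u i (update t i x)) (Vd i (u i) t) (s i) := by
      have := hasDerivAt_comp_update i (diffAt_of_C2 hop (hu i) ht); rwa [hti] at this
    have hB : HasDerivAt (fun x => u i (update s i x)) (Vd i (u i) s) (s i) :=
      hasDerivAt_comp_update i (diffAt_of_C2 hop (hu i) hs)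
    have hC : HasDerivAt (fun x => u j (update t i x)) (Vd i (u j) t) (s i) := by
      have := hasDerivAt_comp_update i (diffAt_of_C2 hop (hu j) ht); rwa [hti] at this
    have hD : HasDerivAt (fun x => u j (update s i x)) (Vd i (u j) s) (s i) :=
      hasDerivAt_comp_update i (diffAt_of_C2 hop (hu j) hs)
    have hL : HasDerivAt
        (fun x => u i t - u i (update t i x) - u i s + u i (update s i x))
        (0 - Vd i (u i) t - 0 + Vd i (u i) s) (s i) :=
      (((hasDerivAt_const (s i) (u i t)).sub hA).sub (hasDerivAt_const (s i) (u i s))).add hB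
    have hR : HasDerivAt
        (fun x => u j t - u j (update t i x) - u j s + u j (update s i x))
        (0 - Vd i (u j) t - 0 + Vd i (u j) s) (s i) :=
      (((hasDerivAt_const (s i) (u j t)).sub hC).sub (hasDerivAt_const (s i) (u j s))).add hD
    have heq : (fun x => u i t - u i (update t i x) - u i s + u i (update s i x))
        =ᶠ[nhds (s i)] (fun x => u j t - u j (update t i x) - u j s + u j (update s i x)) := by
      filter_upwards [(hop i).mem_nhds hsi] with x hx
      exact hE y hy x hx
    have := heq.deriv_eq
    rw [hL.deriv, hR.deriv] at this
    linarith
  -- conclude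
  have g1 : pder j (pder i (u i)) s = deriv (fun y => Vd i (u i) (update s j y)) (s j) :=
    pder_congr j (pder_eventuallyEq_Vd hop (hu i) hs i)
  have g2 : pder j (pder i (u j)) s = deriv (fun y => Vd i (u j) (update s j y)) (s j) :=
    pder_congr j (pder_eventuallyEq_Vd hop (hu j) hs i)
  rw [g1, g2]
  have heq2 : (fun y => Vd i (u i) (update s j y)) =ᶠ[nhds (s j)]
      (fun y => Vd i (u j) (update s j y) + (Vd i (u i) s - Vd i (u j) s)) := by
    filter_upwards [(hop j).mem_nhds hsj] with y hy
    have := hstar y hy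
    linarith
  rw [heq2.deriv_eq, deriv_add_const]

/-- **Monderer–Shapley-2 (1996).** A strategic-form game with finitely many players, whose
strategy sets are (nonempty) open intervals of `ℝ` and whose utilities are twice
continuously differentiable on the product of the strategy sets, is an exact potential game
iff for every pair of players `(i, j)` one has
`∂²u_i/∂s_i∂s_j = ∂²u_j/∂s_i∂s_j` everywhere on the product of the strategy sets. -/
theorem monderer_shapley_second_order_characterization
    {K : ℕ} (S : Fin K → Set ℝ)
    (hne : ∀ i, (S i).Nonempty) (hop : ∀ i, IsOpen (S i)) (hcv : ∀ i, Convex ℝ (S i))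
    (u : ∀ _ : Fin K, (Fin K → ℝ) → ℝ)
    (hu : ∀ i, ContDiffOn ℝ 2 (u i) (Set.univ.pi S)) :
    (∃ φ : (Fin K → ℝ) → ℝ, ∀ i, ∀ s ∈ Set.univ.pi S, ∀ x ∈ S i,
        u i s - u i (Function.update s i x) = φ s - φ (Function.update s i x)) ↔
    (∀ i j : Fin K, ∀ s ∈ Set.univ.pi S,
        pder j (pder i (u i)) s = pder j (pder i (u j)) s) := by
  constructor
  · rintro ⟨φ, hφ⟩
    exact forward_dir hop hu hφ
  · intro hyp
    classical
    set b : Fin K → ℝ := fun l => (hne l).choose with hb_def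
    have hbS : ∀ l, b l ∈ S l := fun l => (hne l).choose_spec
    set z : ℕ → (Fin K → ℝ) → (Fin K → ℝ) :=
      fun m s l => if (l : ℕ) < m then s l else b l with hz_def
    have hzmem : ∀ (m : ℕ) (s : Fin K → ℝ), s ∈ Set.univ.pi S → z m s ∈ Set.univ.pi S := by
      intro m s hs
      rw [Set.mem_univ_pi]
      intro l
      by_cases h : (l : ℕ) < m
      · simpa [hz_def, h] using (Set.mem_univ_pi.mp hs) l
      · simpa [hz_def, h] using hbS l
    have hzK : ∀ s : Fin K → ℝ, z K s = s := by
      intro s; funext l; simp [hz_def, l.isLt]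
    have hz0 : ∀ s : Fin K → ℝ, z 0 s = b := by
      intro s; funext l; simp [hz_def]
    have hz3 : ∀ (k : Fin K) (s : Fin K → ℝ),
        z ((k : ℕ) + 1) s = Function.update (z (k : ℕ) s) k (s k) := by
      intro k s; funext l
      by_cases h : l = k
      · subst h; simp [hz_def]
      · have hlk : (l : ℕ) ≠ (k : ℕ) := fun hc => h (Fin.ext hc)
        rw [Function.update_of_ne h]
        simp only [hz_def]
        have h3 : ((l : ℕ) < (k : ℕ) + 1) ↔ ((l : ℕ) < (k : ℕ)) := by omega
        simp only [h3]
    refine ⟨fun s => ∑ k : Fin K, (u k (z ((k : ℕ) + 1) s) - u k (z (k : ℕ) s)), ?_⟩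
    intro i s hs x hx
    set s' := Function.update s i x with hs'_def
    have hs' : s' ∈ Set.univ.pi S := mem_pi_update hs hx
    have hz1 : ∀ m : ℕ, m ≤ (i : ℕ) → z m s' = z m s := by
      intro m hm; funext l
      by_cases h : (l : ℕ) < m
      · have hli : l ≠ i := by
          intro hc; subst hc; omega
        simp [hz_def, h, hs'_def, Function.update_of_ne hli]
      · simp [hz_def, h]
    have hz2 : ∀ m : ℕ, (i : ℕ) < m → z m s' = Function.update (z m s) i x := by
      intro m hm; funext l
      by_cases h : l = i
      · subst h; simp [hz_def, hm, hs'_def]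
      · rw [Function.update_of_ne h]
        simp only [hz_def]
        by_cases h2 : (l : ℕ) < m
        · simp [h2, hs'_def, Function.update_of_ne h]
        · simp [h2]
    set B : ℕ → ℝ := fun m => u i (z m s) - u i (z m s') with hB_def
    have hd : ∀ k : Fin K,
        (u k (z ((k : ℕ) + 1) s) - u k (z (k : ℕ) s))
          - (u k (z ((k : ℕ) + 1) s') - u k (z (k : ℕ) s'))
        = B ((k : ℕ) + 1) - B (k : ℕ) := by
      intro k
      rcases lt_trichotomy (k : ℕ) (i : ℕ) with hki | hki | hki
      · have e1 : z ((k : ℕ) + 1) s' = z ((k : ℕ) + 1) s := hz1 _ (by omega)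
        have e2 : z (k : ℕ) s' = z (k : ℕ) s := hz1 _ (by omega)
        have e3 : B ((k : ℕ) + 1) = 0 := by rw [hB_def]; simp [e1]
        have e4 : B (k : ℕ) = 0 := by rw [hB_def]; simp [e2]
        rw [e3, e4, e1, e2]; ring
      · have hki' : k = i := Fin.ext hki
        subst hki'
        simp only [hB_def]; ring
      · have hik : i ≠ k := by
          intro hc; subst hc; omega
        set w := z (k : ℕ) s with hw_def
        have hw : w ∈ Set.univ.pi S := hzmem _ s hs
        have hyk : s k ∈ S k := (Set.mem_univ_pi.mp hs) k
        have hW : ∀ r ∈ Set.univ.pi S,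
            fderiv ℝ (Vd k (u k)) r (Pi.single i 1) = fderiv ℝ (Vd k (u i)) r (Pi.single i 1) := by
          intro r hr
          have h1 := pder_pder_eq hop (hu k) hr i k
          have h2 := pder_pder_eq hop (hu i) hr i k
          rw [← h1, ← h2]
          exact hyp k i r hr
        have key := double_diff_eq hop hcv (hu k) (hu i) hik hW hw hx hyk
        have r1 : z ((k : ℕ) + 1) s = Function.update w k (s k) := hz3 k s
        have r2 : z ((k : ℕ) + 1) s' = Function.update (Function.update w k (s k)) i x := by
          rw [hz2 _ (by omega), r1]
        have r3 : z (k : ℕ) s' = Function.update w i x := by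
          rw [hz2 _ (by omega)]
        simp only [hB_def]
        rw [r1, r2, r3]
        linarith
    have hsum : (∑ k : Fin K, (u k (z ((k : ℕ) + 1) s) - u k (z (k : ℕ) s)))
        - (∑ k : Fin K, (u k (z ((k : ℕ) + 1) s') - u k (z (k : ℕ) s')))
        = B K - B 0 := by
      rw [← Finset.sum_sub_distrib]
      rw [Finset.sum_congr rfl (fun k _ => hd k)]
      rw [Fin.sum_univ_eq_sum_range (fun m => B (m + 1) - B m) K]
      exact Finset.sum_range_sub B K
    have hBK : B K = u i s - u i s' := by rw [hB_def]; simp [hzK]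
    have hB0 : B 0 = 0 := by rw [hB_def]; simp [hz0]
    rw [hBK, hB0, sub_zero] at hsum
    exact hsum.symm
end

section
/- Theorem (Rosen, 1965, uniqueness under diagonal strict concavity). Let G be a strategic-form game with finitely many players in which each strategy set S_i is a nonempty compact convex subset of ℝ^{m_i}, and each utility u_i is continuous on S = S_1 × ... × S_K, concave in the player's own strategy s_i, and continuously differentiable. Fix a vector r = (r_1,...,r_K) of positive reals and define the pseudogradient γ(s) = (r_1 ∇_{s_1} u_1(s), ..., r_K ∇_{s_K} u_K(s)). If the diagonal strict concavity condition holds — for all s, s' ∈ S with s ≠ s', (s' − s)ᵀ γ(s) + (s − s')ᵀ γ(s') > 0 — then G has exactly one pure-strategy Nash equilibrium. -/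
open Set

/-- A finite skew-symmetric matrix game has a strategy guaranteeing each row payoff ≥ 0. -/
theorem skew_game {ι : Type*} [Fintype ι] [Nonempty ι] [DecidableEq ι]
    (M : ι → ι → ℝ) (hM : ∀ i j, M i j = - M j i) :
    ∃ lam : ι → ℝ, (∀ i, 0 ≤ lam i) ∧ ∑ i, lam i = 1 ∧
      ∀ j, 0 ≤ ∑ i, lam i * M j i := by
  by_contra hcon
  push_neg at hcon
  -- the payoff map
  set T : (ι → ℝ) → (ι → ℝ) := fun lam j => ∑ i, lam i * M j i with hT
  have hTlin : IsLinearMap ℝ T := by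
    constructor
    · intro a b; funext j; simp [hT, add_mul, Finset.sum_add_distrib]
    · intro c a; funext j
      simp [hT, Finset.mul_sum, mul_assoc]
  have hTcont : Continuous T := by
    apply continuous_pi; intro j
    exact continuous_finset_sum _ fun i _ => (continuous_apply i).mul continuous_const
  set A : Set (ι → ℝ) := T '' stdSimplex ℝ ι with hA
  set B : Set (ι → ℝ) := {v | ∀ j, 0 ≤ v j} with hB
  have hAconv : Convex ℝ A := (convex_stdSimplex ℝ ι).is_linear_image hTlin
  have hAcomp : IsCompact A := (isCompact_stdSimplex ℝ ι).image hTcont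
  have hBconv : Convex ℝ B := by
    intro x hx y hy a b ha hb hab j
    have : (a • x + b • y) j = a * x j + b * y j := rfl
    rw [this]
    exact add_nonneg (mul_nonneg ha (hx j)) (mul_nonneg hb (hy j))
  have hBclosed : IsClosed B := by
    have : B = ⋂ j, {v : ι → ℝ | 0 ≤ v j} := by
      ext v; simp [hB]
    rw [this]
    exact isClosed_iInter fun j => isClosed_le continuous_const (continuous_apply j)
  have hdisj : Disjoint A B := by
    rw [Set.disjoint_left]
    rintro v ⟨lam, hlam, rfl⟩ hv
    obtain ⟨j, hj⟩ := hcon lam hlam.1 hlam.2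
    exact absurd (hv j) (not_le.mpr hj)
  obtain ⟨f, uu, vv, hfu, huv, hvf⟩ :=
    geometric_hahn_banach_compact_closed hAconv hAcomp hBconv hBclosed hdisj
  have h0B : (0 : ι → ℝ) ∈ B := fun j => le_refl 0
  have hv0 : vv < 0 := by simpa using hvf 0 h0B
  -- f is nonnegative on B
  have hfB : ∀ z ∈ B, 0 ≤ f z := by
    intro z hz
    by_contra hneg
    push_neg at hneg
    have ht : (0:ℝ) < (vv - 1) / f z := div_pos_of_neg_of_neg (by linarith) hneg
    have hzB : ((vv - 1) / f z) • z ∈ B := fun j => mul_nonneg ht.le (hz j)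
    have := hvf _ hzB
    rw [map_smul] at this
    have : vv < (vv - 1) / f z * f z := this
    rw [div_mul_cancel₀ _ (ne_of_lt hneg)] at this
    linarith
  set c : ι → ℝ := fun j => f (Pi.single j 1) with hc
  have hc0 : ∀ j, 0 ≤ c j := by
    intro j
    apply hfB
    intro k
    rcases eq_or_ne j k with rfl | hne
    · simp
    · simp [Pi.single_eq_of_ne (Ne.symm hne)]
  have hfrep : ∀ w : ι → ℝ, f w = ∑ j, w j * c j := by
    intro w
    have hw : w = ∑ j, w j • (Pi.single j 1 : ι → ℝ) := by
      funext k
      simp [Finset.sum_apply, Pi.single_apply]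
    calc f w = f (∑ j, w j • (Pi.single j 1 : ι → ℝ)) := by rw [← hw]
    _ = ∑ j, w j * c j := by
        rw [map_sum]
        congr 1; funext j
        rw [map_smul]; rfl
  -- f on A is negative
  have hfA : ∀ lam ∈ stdSimplex ℝ ι, f (T lam) < 0 := fun lam hlam =>
    lt_trans (hfu _ ⟨lam, hlam, rfl⟩) (lt_trans huv hv0)
  set Sc := ∑ j, c j with hSc
  have hScpos : 0 < Sc := by
    rcases (Finset.sum_nonneg fun j _ => hc0 j).lt_or_eq with h | h
    · exact h
    have hcall : ∀ j, c j = 0 := by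
      intro j
      have := (Finset.sum_eq_zero_iff_of_nonneg (fun j _ => hc0 j)).mp h.symm
      exact this j (Finset.mem_univ j)
    have hlam0 : (fun _ : ι => (Fintype.card ι : ℝ)⁻¹) ∈ stdSimplex ℝ ι := by
      constructor
      · intro i; positivity
      · simp only [Finset.sum_const, Finset.card_univ, nsmul_eq_mul]
        rw [mul_inv_cancel₀]
        exact_mod_cast Fintype.card_ne_zero
    have := hfA _ hlam0
    rw [hfrep] at this
    simp only [hcall, mul_zero, Finset.sum_const_zero] at this
    exact absurd this (lt_irrefl 0)
  set lam : ι → ℝ := fun j => c j / Sc with hlam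
  have hlamS : lam ∈ stdSimplex ℝ ι := by
    constructor
    · intro i; exact div_nonneg (hc0 i) hScpos.le
    · rw [← Finset.sum_div, div_self hScpos.ne']
  have hfT : f (T lam) = 0 := by
    rw [hfrep]
    have : ∑ j, T lam j * c j = (∑ j, ∑ i, c i * M j i * c j) / Sc := by
      rw [Finset.sum_div]
      congr 1; funext j
      rw [hT]
      simp only [hlam]
      rw [Finset.sum_div, Finset.sum_mul]
      congr 1; funext i
      field_simp
    rw [this]
    have hzero : (∑ j, ∑ i, c i * M j i * c j) = 0 := by
      have h1 : (∑ j, ∑ i, c i * M j i * c j) = - ∑ j, ∑ i, c i * M j i * c j := by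
        conv_lhs => rw [Finset.sum_comm]
        rw [← Finset.sum_neg_distrib]
        congr 1; funext j
        rw [← Finset.sum_neg_distrib]
        congr 1; funext i
        rw [hM i j]; ring
      linarith
    rw [hzero, zero_div]
  exact absurd (hfA lam hlamS) (by rw [hfT]; exact lt_irrefl 0)

open Set Filter Topology

/-- A game whose matrix has `B + Bᵀ ≥ 0` entrywise admits `λ` in the simplex
with `Bλ ≥ 0`. -/
theorem nonneg_sym_game {ι : Type*} [Fintype ι] [Nonempty ι] [DecidableEq ι]
    (B : ι → ι → ℝ) (hB : ∀ i j, 0 ≤ B i j + B j i) :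
    ∃ lam : ι → ℝ, (∀ i, 0 ≤ lam i) ∧ ∑ i, lam i = 1 ∧
      ∀ j, 0 ≤ ∑ i, lam i * B j i := by
  obtain ⟨lam, h0, h1, h2⟩ := skew_game (fun j i => (B j i - B i j) / 2)
    (fun i j => by ring)
  refine ⟨lam, h0, h1, fun j => ?_⟩
  have key : ∀ i, lam i * ((B j i - B i j)/2) ≤ lam i * B j i := by
    intro i
    apply mul_le_mul_of_nonneg_left _ (h0 i)
    have := hB j i
    linarith
  calc (0:ℝ) ≤ ∑ i, lam i * ((B j i - B i j)/2) := h2 j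
  _ ≤ ∑ i, lam i * B j i := Finset.sum_le_sum fun i _ => key i

theorem deriv_le_of_slope_le {f : ℝ → ℝ} {d c : ℝ} (hf : HasDerivAt f d 0)
    (h : ∀ t ∈ Set.Ioc (0:ℝ) 1, (f t - f 0) / t ≤ c) : d ≤ c := by
  have htend : Tendsto (slope f 0) (𝓝[>] 0) (𝓝 d) :=
    (hasDerivAt_iff_tendsto_slope.mp hf).mono_left
      (nhdsWithin_mono 0 fun x hx => ne_of_gt hx)
  refine le_of_tendsto htend ?_
  filter_upwards [Ioc_mem_nhdsGT_of_mem (⟨le_refl 0, one_pos⟩ : (0:ℝ) ∈ Set.Ico 0 1)]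
    with t ht
  rw [slope_def_field]
  simpa [div_eq_iff] using h t ht

theorem le_deriv_of_le_slope {f : ℝ → ℝ} {d c : ℝ} (hf : HasDerivAt f d 0)
    (h : ∀ t ∈ Set.Ioc (0:ℝ) 1, c ≤ (f t - f 0) / t) : c ≤ d := by
  have := deriv_le_of_slope_le (c := -c) hf.neg ?_
  · linarith
  · intro t ht
    have h2 := h t ht
    have h3 : (-f t - -f 0) / t = -((f t - f 0) / t) := by ring
    rw [Pi.neg_apply, Pi.neg_apply, h3]
    linarith

open Set Filter Topology

section VI

variable {ι : Type*} [Fintype ι] {E : ι → Type*}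
  [∀ i, NormedAddCommGroup (E i)] [∀ i, InnerProductSpace ℝ (E i)]

/-- Existence of a solution to the (strong) variational inequality for a
continuous family `g` satisfying a strict monotonicity (diagonal concavity)
condition, on a nonempty compact convex product set. -/
theorem vi_exists (S : ∀ i, Set (E i)) (g : ∀ i, (∀ j, E j) → E i) (r : ι → ℝ)
    (hne : ∀ i, (S i).Nonempty) (hcomp : ∀ i, IsCompact (S i))
    (hconv : ∀ i, Convex ℝ (S i)) (hr : ∀ i, 0 < r i)
    (hg : ∀ i, Continuous (g i))
    (hmono : ∀ s ∈ Set.univ.pi S, ∀ s' ∈ Set.univ.pi S, s ≠ s' →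
      0 < (∑ i, r i * (inner ℝ (s' i - s i) (g i s) : ℝ)) +
          (∑ i, r i * (inner ℝ (s i - s' i) (g i s') : ℝ))) :
    ∃ x ∈ Set.univ.pi S, ∀ i, ∀ z ∈ S i, (inner ℝ (z - x i) (g i x) : ℝ) ≤ 0 := by
  classical
  set Spi := Set.univ.pi S with hSpi
  set Phi : (∀ j, E j) → (∀ j, E j) → ℝ :=
    fun y x => ∑ i, r i * (inner ℝ (x i - y i) (g i y) : ℝ) with hPhi
  have hPhi_self : ∀ p, Phi p p = 0 := by
    intro p; simp [hPhi]
  have hmono' : ∀ s ∈ Spi, ∀ s' ∈ Spi, s ≠ s' → 0 < Phi s s' + Phi s' s :=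
    fun s hs s' hs' h => hmono s hs s' hs' h
  have hSpicomp : IsCompact Spi := isCompact_univ_pi hcomp
  have hSpiconv : Convex ℝ Spi := convex_pi fun i _ => hconv i
  have hSpine : Spi.Nonempty := ⟨fun i => (hne i).choose,
    Set.mem_univ_pi.2 fun i => (hne i).choose_spec⟩
  -- Step 1: existence of a *weak* solution via compactness (FIP) and the game lemma.
  have hweak : ∃ x ∈ Spi, ∀ y ∈ Spi, 0 ≤ Phi y x := by
    by_contra hno
    push_neg at hno
    set Z : ↥Spi → Set (∀ j, E j) := fun y => {x | 0 ≤ Phi (y : ∀ j, E j) x} with hZ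
    have hZclosed : ∀ y, IsClosed (Z y) := by
      intro y
      apply isClosed_le continuous_const
      apply continuous_finset_sum
      intro i _
      exact continuous_const.mul
        (Continuous.inner ((continuous_apply i).sub continuous_const) continuous_const)
    have hempty : Spi ∩ ⋂ y : ↥Spi, Z y = ∅ := by
      ext x
      simp only [Set.mem_inter_iff, Set.mem_iInter, Set.mem_empty_iff_false, iff_false,
        not_and, not_forall]
      intro hx
      obtain ⟨y, hy, hlt⟩ := hno x hx
      exact ⟨⟨y, hy⟩, by simpa [hZ] using not_le.mpr hlt⟩
    obtain ⟨t, ht⟩ := hSpicomp.elim_finite_subfamily_closed Z hZclosed hempty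
    rcases t.eq_empty_or_nonempty with rfl | htne
    · simp only [Finset.notMem_empty, Set.iInter_of_empty, Set.iInter_univ,
        Set.inter_univ] at ht
      exact absurd ht hSpine.ne_empty
    · have : Nonempty ↥t := ⟨⟨htne.choose, htne.choose_spec⟩⟩
      set B : ↥t → ↥t → ℝ := fun a b => Phi ((a : ↥Spi) : ∀ j, E j) ((b : ↥Spi) : ∀ j, E j)
        with hB
      have hBsym : ∀ a b : ↥t, 0 ≤ B a b + B b a := by
        intro a b
        rcases eq_or_ne ((a : ↥Spi) : ∀ j, E j) ((b : ↥Spi) : ∀ j, E j) with h | h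
        · rw [hB]
          simp only [h, hPhi_self]
          norm_num
        · exact (hmono' _ (a:↥Spi).2 _ (b:↥Spi).2 h).le
      obtain ⟨lam, hl0, hl1, hlB⟩ := nonneg_sym_game B hBsym
      set xstar : ∀ j, E j := ∑ j : ↥t, lam j • ((j : ↥Spi) : ∀ j, E j) with hxstar
      have hxmem : xstar ∈ Spi := by
        apply hSpiconv.sum_mem (fun j _ => hl0 j) hl1
        intro j _
        exact (j : ↥Spi).2
      have haff : ∀ y : ∀ j, E j, Phi y xstar = ∑ j : ↥t, lam j * Phi y ((j:↥Spi) : ∀ j, E j) := by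
        intro y
        have hxi : ∀ i, xstar i - y i =
            ∑ j : ↥t, lam j • (((j:↥Spi) : ∀ j, E j) i - y i) := by
          intro i
          have h1 : xstar i = ∑ j : ↥t, lam j • (((j:↥Spi) : ∀ j, E j) i) := by
            rw [hxstar]
            simp [Finset.sum_apply]
          have h2 : ∑ j : ↥t, lam j • (((j:↥Spi) : ∀ j, E j) i - y i)
              = (∑ j : ↥t, lam j • (((j:↥Spi) : ∀ j, E j) i)) - ∑ j : ↥t, lam j • y i := by
            rw [← Finset.sum_sub_distrib]
            congr 1; funext j
            rw [smul_sub]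
          have h3 : ∑ j : ↥t, lam j • y i = y i := by
            rw [← Finset.sum_smul, hl1, one_smul]
          rw [h2, h3, h1]
        simp only [hPhi]
        have h4 : ∀ i, (inner ℝ (xstar i - y i) (g i y) : ℝ)
            = ∑ j : ↥t, lam j * (inner ℝ ((((j:↥Spi) : ∀ j, E j)) i - y i) (g i y) : ℝ) := by
          intro i
          rw [hxi i, sum_inner]
          congr 1; funext j
          rw [real_inner_smul_left]
        calc ∑ i, r i * (inner ℝ (xstar i - y i) (g i y) : ℝ)
            = ∑ i, ∑ j : ↥t, lam j *
              (r i * (inner ℝ ((((j:↥Spi) : ∀ j, E j)) i - y i) (g i y) : ℝ)) := by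
              congr 1; funext i
              rw [h4 i, Finset.mul_sum]
              congr 1; funext j
              ring
        _ = ∑ j : ↥t, lam j * ∑ i, r i *
              (inner ℝ ((((j:↥Spi) : ∀ j, E j)) i - y i) (g i y) : ℝ) := by
              rw [Finset.sum_comm]
              congr 1; funext j
              rw [Finset.mul_sum]
      have hge : ∀ y : ↥t, 0 ≤ Phi ((y : ↥Spi) : ∀ j, E j) xstar := by
        intro y
        rw [haff]
        exact hlB y
      have : xstar ∈ Spi ∩ ⋂ y ∈ t, Z y := by
        refine ⟨hxmem, ?_⟩
        rw [Set.mem_iInter₂]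
        intro y hy
        exact hge ⟨y, hy⟩
      rw [ht] at this
      exact this
  -- Step 2: Minty's trick — a weak solution is a strong solution.
  obtain ⟨x, hx, hxweak⟩ := hweak
  refine ⟨x, hx, ?_⟩
  intro i z hz
  set w : ∀ j, E j := Pi.single i (z - x i) with hw
  set F : ℝ → ℝ := fun t => (inner ℝ (z - x i) (g i (x + t • w)) : ℝ) with hF
  have hFcont : Continuous F := by
    apply Continuous.inner continuous_const
    exact (hg i).comp (continuous_const.add (continuous_id.smul continuous_const))
  have hkey : ∀ t ∈ Set.Ioc (0:ℝ) 1, F t ≤ 0 := by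
    intro t ht
    set yt : ∀ j, E j := x + t • w with hyt
    have hytmem : yt ∈ Spi := by
      rw [hSpi, Set.mem_univ_pi]
      intro j
      rcases eq_or_ne j i with rfl | hji
      · have : yt j = x j + t • (z - x j) := by
          simp [hyt, hw]
        rw [this]
        exact (hconv j).add_smul_sub_mem ((Set.mem_univ_pi.1 hx) j) hz ⟨ht.1.le, ht.2⟩
      · have : yt j = x j := by
          simp [hyt, hw, Pi.single_eq_of_ne hji]
        rw [this]
        exact (Set.mem_univ_pi.1 hx) j
    have h0 := hxweak yt hytmem
    have hsum : Phi yt x = r i * (inner ℝ (-(t • (z - x i))) (g i yt) : ℝ) := by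
      simp only [hPhi]
      have hyti : yt i = x i + t • (z - x i) := by simp [hyt, hw]
      have hsub : x i - yt i = -(t • (z - x i)) := by rw [hyti]; abel
      rw [Finset.sum_eq_single i, hsub]
      · intro k _ hk
        have hzk : x k - yt k = 0 := by
          simp [hyt, hw, Pi.single_eq_of_ne hk]
        rw [hzk, inner_zero_left, mul_zero]
      · intro h; exact absurd (Finset.mem_univ i) h
    rw [hsum] at h0
    have h1 : (inner ℝ (-(t • (z - x i))) (g i yt) : ℝ) = -(t * F t) := by
      rw [inner_neg_left, real_inner_smul_left]
    rw [h1] at h0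
    by_contra hpos
    push_neg at hpos
    have : 0 < r i * (t * F t) := mul_pos (hr i) (mul_pos ht.1 hpos)
    linarith
  have htendsto : Tendsto F (𝓝[>] 0) (𝓝 (F 0)) :=
    (hFcont.tendsto 0).mono_left nhdsWithin_le_nhds
  have hF0 : F 0 ≤ 0 := by
    refine le_of_tendsto htendsto ?_
    filter_upwards [Ioc_mem_nhdsGT_of_mem (⟨le_refl 0, one_pos⟩ : (0:ℝ) ∈ Set.Ico 0 1)]
      with t ht using hkey t ht
  have : F 0 = (inner ℝ (z - x i) (g i x) : ℝ) := by
    simp [hF]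
  rwa [this] at hF0

end VI

open Set Filter Topology InnerProductSpace

section Bridge

variable {ι : Type*} [Fintype ι] [DecidableEq ι] {E : ι → Type*}
  [∀ i, NormedAddCommGroup (E i)] [∀ i, InnerProductSpace ℝ (E i)]
  [∀ i, CompleteSpace (E i)]

theorem clm_pi_single_apply (i : ι) (v : E i) :
    (ContinuousLinearMap.pi (Pi.single i (ContinuousLinearMap.id ℝ (E i)))) v
      = Pi.single i v := by
  funext j
  rw [ContinuousLinearMap.pi_apply]
  rcases eq_or_ne j i with rfl | hji
  · simp
  · simp [Pi.single_eq_of_ne hji]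

theorem partial_fderiv_eq (f : (∀ j, E j) → ℝ) (hf : ContDiff ℝ 1 f)
    (s : ∀ j, E j) (i : ι) :
    fderiv ℝ (fun x => f (Function.update s i x)) (s i)
      = (fderiv ℝ f s).comp
          (ContinuousLinearMap.pi (Pi.single i (ContinuousLinearMap.id ℝ (E i)))) := by
  have h1 := hasFDerivAt_update (𝕜 := ℝ) s (s i)
  have h2 : HasFDerivAt f (fderiv ℝ f s) (Function.update s i (s i)) := by
    rw [Function.update_eq_self]
    exact ((hf.differentiable one_ne_zero) s).hasFDerivAt
  exact (h2.comp (s i) h1).fderiv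

theorem partial_grad_inner (f : (∀ j, E j) → ℝ) (hf : ContDiff ℝ 1 f)
    (s : ∀ j, E j) (i : ι) (v : E i) :
    (inner ℝ v (gradient (fun x => f (Function.update s i x)) (s i)) : ℝ)
      = fderiv ℝ f s (Pi.single i v) := by
  rw [real_inner_comm]
  rw [show gradient (fun x => f (Function.update s i x)) (s i)
      = (toDual ℝ (E i)).symm (fderiv ℝ (fun x => f (Function.update s i x)) (s i)) from rfl]
  rw [toDual_symm_apply, partial_fderiv_eq f hf s i]
  rw [ContinuousLinearMap.comp_apply, clm_pi_single_apply]

theorem partial_grad_continuous (f : (∀ j, E j) → ℝ) (hf : ContDiff ℝ 1 f) (i : ι) :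
    Continuous (fun s : ∀ j, E j =>
      gradient (fun x => f (Function.update s i x)) (s i)) := by
  have heq : ∀ s : ∀ j, E j, gradient (fun x => f (Function.update s i x)) (s i)
      = (toDual ℝ (E i)).symm ((fderiv ℝ f s).comp
          (ContinuousLinearMap.pi (Pi.single i (ContinuousLinearMap.id ℝ (E i))))) := by
    intro s
    rw [show gradient (fun x => f (Function.update s i x)) (s i)
      = (toDual ℝ (E i)).symm (fderiv ℝ (fun x => f (Function.update s i x)) (s i)) from rfl,
      partial_fderiv_eq f hf s i]
  simp only [heq]
  apply (toDual ℝ (E i)).symm.continuous.comp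
  exact (hf.continuous_fderiv one_ne_zero).clm_comp continuous_const

theorem hasDerivAt_update_line (f : (∀ j, E j) → ℝ) (hf : ContDiff ℝ 1 f)
    (s : ∀ j, E j) (i : ι) (w : E i) :
    HasDerivAt (fun t : ℝ => f (Function.update s i (s i + t • w)))
      (inner ℝ w (gradient (fun x => f (Function.update s i x)) (s i)) : ℝ) 0 := by
  have hupd : ∀ t : ℝ, Function.update s i (s i + t • w) = s + t • Pi.single i w := by
    intro t
    funext j
    rcases eq_or_ne j i with rfl | hji
    · simp
    · simp [Function.update_of_ne hji, Pi.single_eq_of_ne hji]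
  have hline : HasDerivAt (fun t : ℝ => s + t • Pi.single i w) (Pi.single i w) 0 := by
    simpa using ((hasDerivAt_id (0:ℝ)).smul_const (Pi.single i w)).const_add s
  have hfd : HasFDerivAt f (fderiv ℝ f s) ((fun t : ℝ => s + t • Pi.single i w) 0) := by
    simp only [zero_smul, add_zero]
    exact ((hf.differentiable one_ne_zero) s).hasFDerivAt
  have h3 := hfd.comp_hasDerivAt 0 hline
  have h2 : (fun t : ℝ => f (Function.update s i (s i + t • w)))
      = f ∘ (fun t : ℝ => s + t • Pi.single i w) := by
    funext t
    rw [Function.comp_apply, hupd t]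
  rw [partial_grad_inner f hf s i w, h2]
  exact h3

end Bridge


/-- **Rosen (1965), uniqueness under diagonal strict concavity.** A strategic-form game
with finitely many players, nonempty compact convex strategy sets `S i ⊆ ℝ^{m i}`,
utilities continuous on the product of the strategy sets, concave in the player's own
strategy, and continuously differentiable, which satisfies the diagonal strict concavity
condition for some vector `r` of positive weights, has exactly one pure-strategy Nash
equilibrium. -/
theorem rosen_uniqueness_diagonal_strict_concavity
    {K : ℕ} (m : Fin K → ℕ)
    (S : ∀ i : Fin K, Set (EuclideanSpace ℝ (Fin (m i))))
    (u : ∀ _ : Fin K, (∀ j : Fin K, EuclideanSpace ℝ (Fin (m j))) → ℝ)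
    (hne : ∀ i, (S i).Nonempty)
    (hcomp : ∀ i, IsCompact (S i))
    (hconv : ∀ i, Convex ℝ (S i))
    (hcont : ∀ i, ContinuousOn (u i) (Set.univ.pi S))
    (hconc : ∀ i, ∀ s ∈ Set.univ.pi S,
      ConcaveOn ℝ (S i) (fun x => u i (Function.update s i x)))
    (hdiff : ∀ i, ContDiff ℝ 1 (u i))
    (r : Fin K → ℝ) (hr : ∀ i, 0 < r i)
    (hdsc : ∀ s ∈ Set.univ.pi S, ∀ s' ∈ Set.univ.pi S, s ≠ s' →
      0 < ∑ i : Fin K, r i *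
        ((inner ℝ (s' i - s i)
            (gradient (fun x => u i (Function.update s i x)) (s i)) : ℝ) +
         (inner ℝ (s i - s' i)
            (gradient (fun x => u i (Function.update s' i x)) (s' i)) : ℝ))) :
    ∃! s : ∀ j : Fin K, EuclideanSpace ℝ (Fin (m j)),
      s ∈ Set.univ.pi S ∧ ∀ i, ∀ x ∈ S i, u i (Function.update s i x) ≤ u i s := by
  classical
  set g : ∀ i : Fin K, (∀ j : Fin K, EuclideanSpace ℝ (Fin (m j))) →
      EuclideanSpace ℝ (Fin (m i)) :=
    fun i s => gradient (fun x => u i (Function.update s i x)) (s i) with hg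
  have hdir : ∀ (i : Fin K) (s) (w : EuclideanSpace ℝ (Fin (m i))),
      HasDerivAt (fun t : ℝ => u i (Function.update s i (s i + t • w)))
        (inner ℝ w (g i s) : ℝ) 0 :=
    fun i s w => hasDerivAt_update_line (u i) (hdiff i) s i w
  -- Nash equilibrium implies the first-order condition (strong VI solution)
  have eq_to_strong : ∀ s ∈ Set.univ.pi S,
      (∀ i, ∀ x ∈ S i, u i (Function.update s i x) ≤ u i s) →
      ∀ i, ∀ z ∈ S i, (inner ℝ (z - s i) (g i s) : ℝ) ≤ 0 := by
    intro s hs hnash i z hz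
    apply deriv_le_of_slope_le (hdir i s (z - s i))
    intro t ht
    have hmem : s i + t • (z - s i) ∈ S i :=
      (hconv i).add_smul_sub_mem ((Set.mem_univ_pi.1 hs) i) hz ⟨ht.1.le, ht.2⟩
    have hle : u i (Function.update s i (s i + t • (z - s i))) ≤ u i s := hnash i _ hmem
    apply div_nonpos_of_nonpos_of_nonneg _ ht.1.le
    simp only [zero_smul, add_zero, Function.update_eq_self]
    linarith
  -- the first-order condition implies Nash (by own-strategy concavity)
  have strong_to_nash : ∀ s ∈ Set.univ.pi S,
      (∀ i, ∀ z ∈ S i, (inner ℝ (z - s i) (g i s) : ℝ) ≤ 0) →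
      ∀ i, ∀ x ∈ S i, u i (Function.update s i x) ≤ u i s := by
    intro s hs hstrong i x hx
    have hd := hdir i s (x - s i)
    have hcslope : ∀ t ∈ Set.Ioc (0:ℝ) 1,
        u i (Function.update s i x) - u i s ≤
        ((fun t : ℝ => u i (Function.update s i (s i + t • (x - s i)))) t -
         (fun t : ℝ => u i (Function.update s i (s i + t • (x - s i)))) 0) / t := by
      intro t ht
      have hcc := hconc i s hs
      have hcomb : s i + t • (x - s i) = (1 - t) • s i + t • x := by
        rw [sub_smul, one_smul, smul_sub]; abel
      have hkey := hcc.2 ((Set.mem_univ_pi.1 hs) i) hx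
        (by linarith [ht.2] : (0:ℝ) ≤ 1 - t) ht.1.le (by ring)
      simp only [smul_eq_mul, Function.update_eq_self] at hkey
      rw [le_div_iff₀ ht.1]
      simp only [zero_smul, add_zero, Function.update_eq_self, hcomb]
      nlinarith [hkey]
    have h1 := le_deriv_of_le_slope hd hcslope
    have h2 := hstrong i x hx
    linarith
  -- existence via the abstract variational inequality theorem
  have hmono : ∀ s ∈ Set.univ.pi S, ∀ s' ∈ Set.univ.pi S, s ≠ s' →
      0 < (∑ i, r i * (inner ℝ (s' i - s i) (g i s) : ℝ)) +
          (∑ i, r i * (inner ℝ (s i - s' i) (g i s') : ℝ)) := by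
    intro s hs s' hs' hss
    have h := hdsc s hs s' hs' hss
    rw [← Finset.sum_add_distrib]
    calc (0:ℝ) < ∑ i : Fin K, r i *
        ((inner ℝ (s' i - s i) (g i s) : ℝ) + (inner ℝ (s i - s' i) (g i s') : ℝ)) := h
    _ = ∑ i : Fin K, (r i * (inner ℝ (s' i - s i) (g i s) : ℝ) +
          r i * (inner ℝ (s i - s' i) (g i s') : ℝ)) := by
        congr 1; funext i; ring
  obtain ⟨x, hxmem, hxstrong⟩ := vi_exists S g r hne hcomp hconv hr
    (fun i => partial_grad_continuous (u i) (hdiff i) i) hmono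
  refine ⟨x, ⟨hxmem, strong_to_nash x hxmem hxstrong⟩, ?_⟩
  rintro y ⟨hymem, hynash⟩
  by_contra hne'
  have hystrong := eq_to_strong y hymem hynash
  have hd := hdsc y hymem x hxmem hne'
  have hle : ∑ i : Fin K, r i *
      ((inner ℝ (x i - y i) (g i y) : ℝ) + (inner ℝ (y i - x i) (g i x) : ℝ)) ≤ 0 := by
    apply Finset.sum_nonpos
    intro i _
    have h1 := hystrong i (x i) ((Set.mem_univ_pi.1 hxmem) i)
    have h2 := hxstrong i (y i) ((Set.mem_univ_pi.1 hymem) i)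
    have h3 := (hr i).le
    nlinarith
  rw [hg] at hle
  linarith
end

section
/- Theorem (Yates, 1995, uniqueness of equilibrium for standard best responses). Let G be a strategic-form game with finitely many players in which player i's strategy set is ℝ_{≥0} and player i's best response is a single-valued function BR_i, so that a profile s* ∈ ℝ_{≥0}^K is a pure Nash equilibrium of G if and only if s_i* = BR_i(s_{-i}*) for every i. If the vector best-response map g : ℝ_{≥0}^K → ℝ_{>0}^K defined by g(s) = (BR_1(s_{-1}), ..., BR_K(s_{-K})) is standard (monotone and scalable), then G has at most one pure Nash equilibrium; in particular, if an equilibrium exists it is unique. -/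
/-- **Yates (1995), uniqueness of equilibrium for standard best responses.** Consider a
strategic-form game in which each of the `K` players has strategy set `ℝ_{≥0}` and a
single-valued best-response function `BR i` (depending only on the others' strategies), so
that a nonnegative profile is a pure Nash equilibrium iff it is a fixed point of the vector
best-response map. If the vector best-response map is standard (positive-valued, monotone
and scalable on the nonnegative orthant), the game has at most one pure Nash equilibrium;
in particular, if an equilibrium exists it is unique. -/
theorem yates_standard_best_response_uniqueness
    {K : ℕ}
    (u : ∀ _ : Fin K, (Fin K → ℝ) → ℝ)
    (BR : Fin K → (Fin K → ℝ) → ℝ)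
    (hBRindep : ∀ (i : Fin K) (s : Fin K → ℝ) (x : ℝ),
      BR i (Function.update s i x) = BR i s)
    (hNEiff : ∀ s : Fin K → ℝ, (∀ i, 0 ≤ s i) →
      ((∀ i, ∀ x : ℝ, 0 ≤ x → u i (Function.update s i x) ≤ u i s) ↔
        ∀ i, s i = BR i s))
    (hpos : ∀ s : Fin K → ℝ, (∀ i, 0 ≤ s i) → ∀ i, 0 < BR i s)
    (hmono : ∀ s s' : Fin K → ℝ, (∀ i, 0 ≤ s i) → s ≤ s' → ∀ i, BR i s ≤ BR i s')
    (hscal : ∀ α : ℝ, 1 < α → ∀ s : Fin K → ℝ, (∀ i, 0 ≤ s i) →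
      ∀ i, BR i (α • s) < α * BR i s) :
    ∀ s s' : Fin K → ℝ, (∀ i, 0 ≤ s i) → (∀ i, 0 ≤ s' i) →
      (∀ i, ∀ x : ℝ, 0 ≤ x → u i (Function.update s i x) ≤ u i s) →
      (∀ i, ∀ x : ℝ, 0 ≤ x → u i (Function.update s' i x) ≤ u i s') →
      s = s' := by
  intro s s' hs hs' hNE hNE'
  have hfix : ∀ i, s i = BR i s := (hNEiff s hs).mp hNE
  have hfix' : ∀ i, s' i = BR i s' := (hNEiff s' hs').mp hNE'
  have key : ∀ t t' : Fin K → ℝ, (∀ i, 0 ≤ t i) → (∀ i, 0 ≤ t' i) →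
      (∀ i, t i = BR i t) → (∀ i, t' i = BR i t') → ∀ i, t' i ≤ t i := by
    intro t t' ht ht' hft hft' i0
    have htpos : ∀ i, 0 < t i := fun i => (hft i) ▸ hpos t ht i
    have hne : (Finset.univ : Finset (Fin K)).Nonempty := ⟨i0, Finset.mem_univ _⟩
    set α := Finset.univ.sup' hne (fun i => t' i / t i) with hαdef
    obtain ⟨j, -, hj⟩ := Finset.exists_mem_eq_sup' hne (fun i => t' i / t i)
    have hle : ∀ i, t' i / t i ≤ α := fun i =>
      Finset.le_sup' (fun i => t' i / t i) (Finset.mem_univ i)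
    by_cases hα : α ≤ 1
    · have := hle i0
      have h1 : t' i0 / t i0 ≤ 1 := le_trans this hα
      exact (div_le_one (htpos i0)).mp h1
    · push_neg at hα
      exfalso
      have hle' : ∀ i, t' i ≤ α * t i := by
        intro i
        have := hle i
        calc t' i = (t' i / t i) * t i := (div_mul_cancel₀ (t' i) (htpos i).ne').symm
          _ ≤ α * t i := by
            apply mul_le_mul_of_nonneg_right this (le_of_lt (htpos i))
      have hj' : t' j = α * t j := by
        have h := hj.symm
        rw [div_eq_iff (htpos j).ne'] at h
        rw [h, mul_comm]
      have h1 : BR j t' ≤ BR j (α • t) := hmono t' (α • t) ht' (fun i => hle' i) j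
      have h2 : BR j (α • t) < α * BR j t := hscal α hα t ht j
      have : t' j < α * t j := by
        calc t' j = BR j t' := hft' j
          _ ≤ BR j (α • t) := h1
          _ < α * BR j t := h2
          _ = α * t j := by rw [← hft j]
      linarith [hj'.ge, this]
  funext i
  exact le_antisymm (key s' s hs' hs hfix' hfix i) (key s s' hs hs' hfix hfix' i)
end

section
/- Theorem (Yates, 1995, convergence of standard iterations). Let g : ℝ_{≥0}^K → ℝ_{>0}^K be a standard function (monotone: x ≤ x' componentwise implies g(x) ≤ g(x'); scalable: for all α > 1 and all x, g(αx) < α g(x) componentwise). Suppose g has a fixed point x* ∈ ℝ_{≥0}^K. Then for every initial point p(0) ∈ ℝ_{≥0}^K, the iterates defined by p(n+1) = g(p(n)) converge to x* as n → ∞. -/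
open Filter

/-- Uniqueness (one inequality) for fixed points of a standard function. -/
lemma yates_le_of_fixed
    {K : ℕ} (g : (Fin K → ℝ) → (Fin K → ℝ))
    (hpos : ∀ x : Fin K → ℝ, (∀ i, 0 ≤ x i) → ∀ i, 0 < g x i)
    (hmono : ∀ x x' : Fin K → ℝ, (∀ i, 0 ≤ x i) → x ≤ x' → g x ≤ g x')
    (hscal : ∀ α : ℝ, 1 < α → ∀ x : Fin K → ℝ, (∀ i, 0 ≤ x i) →
      ∀ i, g (α • x) i < α * g x i)
    (y z : Fin K → ℝ) (hy : ∀ i, 0 ≤ y i) (hz : ∀ i, 0 ≤ z i)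
    (hfy : g y = y) (hfz : g z = z) : y ≤ z := by
  have hzp : ∀ i, 0 < z i := by
    intro i; have := hpos z hz i; rwa [hfz] at this
  intro i0
  obtain ⟨j, -, hj⟩ := Finset.exists_max_image Finset.univ (fun i => y i / z i)
    ⟨i0, Finset.mem_univ _⟩
  set β := y j / z j with hβdef
  by_cases hβ : β ≤ 1
  · have h1 : y i0 / z i0 ≤ 1 := le_trans (hj i0 (Finset.mem_univ _)) hβ
    have := (div_le_one (hzp i0)).1 h1
    simpa using this
  · push_neg at hβ
    exfalso
    have hle : y ≤ β • z := by
      intro i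
      have h1 : y i / z i ≤ β := hj i (Finset.mem_univ _)
      have := (div_le_iff₀ (hzp i)).1 h1
      simpa [smul_eq_mul, mul_comm] using this
    have h2 : g y ≤ g (β • z) := hmono y (β • z) hy hle
    have h3 : g (β • z) j < β * g z j := hscal β hβ z hz j
    have hyj : y j < β * z j := by
      calc y j = g y j := by rw [hfy]
        _ ≤ g (β • z) j := h2 j
        _ < β * g z j := h3
        _ = β * z j := by rw [hfz]
    have heq : β * z j = y j := div_mul_cancel₀ _ (hzp j).ne'
    linarith

/-- A positive limit of an orbit of a standard function is a fixed point. -/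
lemma yates_limit_fixed
    {K : ℕ} (g : (Fin K → ℝ) → (Fin K → ℝ))
    (hpos : ∀ x : Fin K → ℝ, (∀ i, 0 ≤ x i) → ∀ i, 0 < g x i)
    (hmono : ∀ x x' : Fin K → ℝ, (∀ i, 0 ≤ x i) → x ≤ x' → g x ≤ g x')
    (hscal : ∀ α : ℝ, 1 < α → ∀ x : Fin K → ℝ, (∀ i, 0 ≤ x i) →
      ∀ i, g (α • x) i < α * g x i)
    (w : ℕ → Fin K → ℝ) (hw0 : ∀ n i, 0 ≤ w n i)
    (hrec : ∀ n, w (n + 1) = g (w n))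
    (L : Fin K → ℝ) (hLpos : ∀ i, 0 < L i)
    (htend : ∀ i, Tendsto (fun n => w n i) atTop (nhds (L i))) : g L = L := by
  have hL0 : ∀ i, 0 ≤ L i := fun i => (hLpos i).le
  have hgL0 : ∀ i, 0 < g L i := hpos L hL0
  -- key estimate from scalability
  have key : ∀ α : ℝ, 1 < α → ∀ i, g L i < α ^ 2 * L i ∧ L i < α ^ 2 * g L i := by
    intro α hα
    have hα0 : (0 : ℝ) < α := by linarith
    have hev : ∀ᶠ n in atTop, ∀ i, α⁻¹ * L i ≤ w n i ∧ w n i ≤ α * L i := by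
      rw [Filter.eventually_all]
      intro i
      have hinv : α⁻¹ < 1 := by
        rw [inv_lt_one_iff₀]; right; exact hα
      have h1 : α⁻¹ * L i < L i := by nlinarith [hLpos i]
      have h2 : L i < α * L i := by nlinarith [hLpos i]
      have e1 := (htend i).eventually (lt_mem_nhds h1)
      have e2 := (htend i).eventually (gt_mem_nhds h2)
      filter_upwards [e1, e2] with n a b
      exact ⟨a.le, b.le⟩
    have hev' : ∀ᶠ n in atTop, ∀ i, α⁻¹ * L i ≤ w (n + 1) i ∧ w (n + 1) i ≤ α * L i :=
      (tendsto_add_atTop_nat 1).eventually hev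
    obtain ⟨n, hn, hn'⟩ := (hev.and hev').exists
    intro i
    -- L ≤ α • w n  and  w n ≤ α • L
    have hle1 : L ≤ α • w n := by
      intro i'
      have h := mul_le_mul_of_nonneg_left (hn i').1 hα0.le
      rw [← mul_assoc, mul_inv_cancel₀ hα0.ne', one_mul] at h
      simpa [smul_eq_mul] using h
    have hle2 : w n ≤ α • L := by
      intro i'
      simpa [smul_eq_mul] using (hn i').2
    constructor
    · -- g L i < α^2 * L i
      have s1 : g L i ≤ g (α • w n) i := hmono L (α • w n) hL0 hle1 i
      have s2 : g (α • w n) i < α * g (w n) i := hscal α hα (w n) (hw0 n) i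
      have s3 : g (w n) i = w (n + 1) i := by rw [hrec n]
      have s4 : w (n + 1) i ≤ α * L i := (hn' i).2
      calc g L i ≤ g (α • w n) i := s1
        _ < α * g (w n) i := s2
        _ = α * w (n + 1) i := by rw [s3]
        _ ≤ α * (α * L i) := mul_le_mul_of_nonneg_left s4 hα0.le
        _ = α ^ 2 * L i := by ring
    · -- L i < α^2 * g L i
      have s1 : g (w n) i ≤ g (α • L) i := hmono (w n) (α • L) (hw0 n) hle2 i
      have s2 : g (α • L) i < α * g L i := hscal α hα L hL0 i
      have s3 : α⁻¹ * L i ≤ w (n + 1) i := (hn' i).1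
      have s4 : L i ≤ α * w (n + 1) i := by
        have h := mul_le_mul_of_nonneg_left s3 hα0.le
        rwa [← mul_assoc, mul_inv_cancel₀ hα0.ne', one_mul] at h
      calc L i ≤ α * w (n + 1) i := s4
        _ = α * g (w n) i := by rw [hrec n]
        _ ≤ α * g (α • L) i := mul_le_mul_of_nonneg_left s1 hα0.le
        _ < α * (α * g L i) := (mul_lt_mul_iff_right₀ hα0).2 s2
        _ = α ^ 2 * g L i := by ring
  -- deduce: ∀ t > 1, g L i < t * L i ∧ L i < t * g L i
  have key' : ∀ t : ℝ, 1 < t → ∀ i, g L i < t * L i ∧ L i < t * g L i := by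
    intro t ht i
    have ht0 : (0 : ℝ) ≤ t := by linarith
    have hαt : 1 < Real.sqrt t := by
      rw [show (1 : ℝ) = Real.sqrt 1 by simp]
      exact Real.sqrt_lt_sqrt (by norm_num) ht
    have hsq : Real.sqrt t ^ 2 = t := Real.sq_sqrt ht0
    have := key (Real.sqrt t) hαt i
    rw [hsq] at this
    exact this
  funext i
  by_contra hne
  rcases lt_or_gt_of_ne hne with h | h
  · -- g L i < L i : take t = L i / g L i > 1
    have ht : 1 < L i / g L i := (one_lt_div (hgL0 i)).2 h
    have := (key' _ ht i).2
    have heq : L i / g L i * g L i = L i := div_mul_cancel₀ _ (hgL0 i).ne'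
    linarith
  · -- L i < g L i : take t = g L i / L i > 1
    have ht : 1 < g L i / L i := (one_lt_div (hLpos i)).2 h
    have := (key' _ ht i).1
    have heq : g L i / L i * L i = g L i := div_mul_cancel₀ _ (hLpos i).ne'
    linarith

/-- **Yates (1995), convergence of standard iterations.** Let
`g : ℝ_{≥0}^K → ℝ_{>0}^K` be a standard function (monotone and scalable) possessing a fixed
point `xstar` in the nonnegative orthant. Then from every nonnegative initial point the
iterates `p (n+1) = g (p n)` converge to `xstar`. -/
theorem yates_standard_iteration_converges
    {K : ℕ} (g : (Fin K → ℝ) → (Fin K → ℝ))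
    (hpos : ∀ x : Fin K → ℝ, (∀ i, 0 ≤ x i) → ∀ i, 0 < g x i)
    (hmono : ∀ x x' : Fin K → ℝ, (∀ i, 0 ≤ x i) → x ≤ x' → g x ≤ g x')
    (hscal : ∀ α : ℝ, 1 < α → ∀ x : Fin K → ℝ, (∀ i, 0 ≤ x i) →
      ∀ i, g (α • x) i < α * g x i)
    (xstar : Fin K → ℝ) (hxstar : ∀ i, 0 ≤ xstar i) (hfix : g xstar = xstar)
    (p0 : Fin K → ℝ) (hp0 : ∀ i, 0 ≤ p0 i) :
    Filter.Tendsto (fun n : ℕ => g^[n] p0) Filter.atTop (nhds xstar) := by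
  classical
  have hxpos : ∀ i, 0 < xstar i := by
    intro i; have := hpos xstar hxstar i; rwa [hfix] at this
  -- iterates preserve nonnegativity
  have hiter_nonneg : ∀ (n : ℕ) (x : Fin K → ℝ), (∀ i, 0 ≤ x i) → ∀ i, 0 ≤ g^[n] x i := by
    intro n
    induction n with
    | zero => intro x hx i; simpa using hx i
    | succ n ih =>
      intro x hx i
      rw [Function.iterate_succ_apply]
      exact ih _ (fun j => (hpos x hx j).le) i
  -- iterates are monotone
  have hiter_mono : ∀ (n : ℕ) (x y : Fin K → ℝ), (∀ i, 0 ≤ x i) → x ≤ y →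
      g^[n] x ≤ g^[n] y := by
    intro n
    induction n with
    | zero => intro x y _ h; simpa using h
    | succ n ih =>
      intro x y hx h
      rw [Function.iterate_succ_apply, Function.iterate_succ_apply]
      exact ih _ _ (fun j => (hpos x hx j).le) (hmono x y hx h)
  set p1 := g p0 with hp1def
  have hp1pos : ∀ i, 0 < p1 i := hpos p0 hp0
  -- choose a scaling factor α
  set α : ℝ := 2 + ∑ i, (p1 i / xstar i + xstar i / p1 i) with hαdef
  have hterm : ∀ i : Fin K, 0 ≤ p1 i / xstar i + xstar i / p1 i := fun i =>
    add_nonneg (div_nonneg (hp1pos i).le (hxpos i).le)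
      (div_nonneg (hxstar i) (hp1pos i).le)
  have hsum0 : 0 ≤ ∑ i, (p1 i / xstar i + xstar i / p1 i) :=
    Finset.sum_nonneg (fun i _ => hterm i)
  have hα1 : 1 < α := by rw [hαdef]; linarith
  have hα0 : (0 : ℝ) < α := by linarith
  have hup : ∀ i, p1 i ≤ α * xstar i := by
    intro i
    have h1 : p1 i / xstar i ≤ ∑ j, (p1 j / xstar j + xstar j / p1 j) := by
      have h2 : p1 i / xstar i + xstar i / p1 i ≤ ∑ j, (p1 j / xstar j + xstar j / p1 j) :=
        Finset.single_le_sum (fun j _ => hterm j) (Finset.mem_univ i)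
      have h3 : 0 ≤ xstar i / p1 i := div_nonneg (hxstar i) (hp1pos i).le
      linarith
    have h2 : p1 i / xstar i ≤ α := by rw [hαdef]; linarith
    exact (div_le_iff₀ (hxpos i)).1 h2
  have hlow : ∀ i, α⁻¹ * xstar i ≤ p1 i := by
    intro i
    have h1 : xstar i / p1 i ≤ ∑ j, (p1 j / xstar j + xstar j / p1 j) := by
      have h2 : p1 i / xstar i + xstar i / p1 i ≤ ∑ j, (p1 j / xstar j + xstar j / p1 j) :=
        Finset.single_le_sum (fun j _ => hterm j) (Finset.mem_univ i)
      have h3 : 0 ≤ p1 i / xstar i := div_nonneg (hp1pos i).le (hxpos i).le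
      linarith
    have h2 : xstar i / p1 i ≤ α := by rw [hαdef]; linarith
    have h3 : xstar i ≤ α * p1 i := (div_le_iff₀ (hp1pos i)).1 h2
    have hαinv : (0 : ℝ) ≤ α⁻¹ := by positivity
    have h := mul_le_mul_of_nonneg_left h3 hαinv
    rwa [← mul_assoc, inv_mul_cancel₀ hα0.ne', one_mul] at h
  -- upper and lower bracketing sequences
  set u : ℕ → Fin K → ℝ := fun n => g^[n] (α • xstar) with hudef
  set v : ℕ → Fin K → ℝ := fun n => g^[n] (α⁻¹ • xstar) with hvdef
  have hαx_nonneg : ∀ i, 0 ≤ (α • xstar) i := by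
    intro i
    simp only [Pi.smul_apply, smul_eq_mul]
    exact mul_nonneg hα0.le (hxstar i)
  have hαinvx_nonneg : ∀ i, 0 ≤ (α⁻¹ • xstar) i := by
    intro i
    simp only [Pi.smul_apply, smul_eq_mul]
    exact mul_nonneg (inv_nonneg.2 hα0.le) (hxstar i)
  have hstep_u : g (α • xstar) ≤ α • xstar := by
    intro i
    have := hscal α hα1 xstar hxstar i
    rw [hfix] at this
    simpa [smul_eq_mul] using this.le
  have hstep_v : α⁻¹ • xstar ≤ g (α⁻¹ • xstar) := by
    intro i
    have h1 := hscal α hα1 (α⁻¹ • xstar) hαinvx_nonneg i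
    have h2 : α • (α⁻¹ • xstar) = xstar := by
      rw [smul_smul, mul_inv_cancel₀ hα0.ne', one_smul]
    rw [h2, hfix] at h1
    have hαinv : (0 : ℝ) < α⁻¹ := inv_pos.2 hα0
    have h := mul_lt_mul_of_pos_left h1 hαinv
    rw [← mul_assoc, inv_mul_cancel₀ hα0.ne', one_mul] at h
    simpa [smul_eq_mul] using h.le
  have hu_succ : ∀ n, u (n + 1) ≤ u n := by
    intro n
    simp only [hudef]
    rw [Function.iterate_succ_apply]
    exact hiter_mono n _ _ (fun j => (hpos _ hαx_nonneg j).le) hstep_u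
  have hv_succ : ∀ n, v n ≤ v (n + 1) := by
    intro n
    simp only [hvdef]
    rw [Function.iterate_succ_apply]
    exact hiter_mono n _ _ hαinvx_nonneg hstep_v
  have hu_ge : ∀ n, xstar ≤ u n := by
    intro n
    have h1 : g^[n] xstar = xstar := Function.iterate_fixed hfix n
    have h2 : xstar ≤ α • xstar := by
      intro i
      have := hxstar i
      simp only [Pi.smul_apply, smul_eq_mul]
      nlinarith
    calc xstar = g^[n] xstar := h1.symm
      _ ≤ g^[n] (α • xstar) := hiter_mono n _ _ hxstar h2
  have hv_le : ∀ n, v n ≤ xstar := by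
    intro n
    have h1 : g^[n] xstar = xstar := Function.iterate_fixed hfix n
    have h2 : α⁻¹ • xstar ≤ xstar := by
      intro i
      have hi := hxstar i
      have hαinv : α⁻¹ ≤ 1 := by
        rw [inv_le_one_iff₀]; right; linarith
      simp only [Pi.smul_apply, smul_eq_mul]
      nlinarith
    calc v n ≤ g^[n] xstar := hiter_mono n _ _ hαinvx_nonneg h2
      _ = xstar := h1
  have hu_nonneg : ∀ n i, 0 ≤ u n i := fun n => hiter_nonneg n _ hαx_nonneg
  have hv_nonneg : ∀ n i, 0 ≤ v n i := fun n => hiter_nonneg n _ hαinvx_nonneg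
  -- the recursion for u and v
  have hu_rec : ∀ n, u (n + 1) = g (u n) := by
    intro n; simp only [hudef]; rw [Function.iterate_succ_apply']
  have hv_rec : ∀ n, v (n + 1) = g (v n) := by
    intro n; simp only [hvdef]; rw [Function.iterate_succ_apply']
  -- limits of the bracketing sequences
  set L : Fin K → ℝ := fun i => ⨅ n, u n i with hLdef
  set M : Fin K → ℝ := fun i => ⨆ n, v n i with hMdef
  have hu_anti : ∀ i, Antitone fun n => u n i := fun i =>
    antitone_nat_of_succ_le fun n => hu_succ n i
  have hv_mono : ∀ i, Monotone fun n => v n i := fun i =>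
    monotone_nat_of_le_succ fun n => hv_succ n i
  have hu_tend : ∀ i, Tendsto (fun n => u n i) atTop (nhds (L i)) := by
    intro i
    exact tendsto_atTop_ciInf (hu_anti i)
      ⟨xstar i, fun x ⟨n, hn⟩ => hn ▸ hu_ge n i⟩
  have hv_tend : ∀ i, Tendsto (fun n => v n i) atTop (nhds (M i)) := by
    intro i
    exact tendsto_atTop_ciSup (hv_mono i)
      ⟨xstar i, fun x ⟨n, hn⟩ => hn ▸ hv_le n i⟩
  have hL_ge : ∀ i, xstar i ≤ L i := by
    intro i
    exact le_ciInf fun n => hu_ge n i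
  have hM_ge : ∀ i, α⁻¹ * xstar i ≤ M i := by
    intro i
    have h0 : v 0 i = α⁻¹ * xstar i := by simp [hvdef]
    have : v 0 i ≤ M i :=
      le_ciSup ⟨xstar i, fun x ⟨n, hn⟩ => hn ▸ hv_le n i⟩ 0
    linarith [this, h0.symm.le]
  have hLpos : ∀ i, 0 < L i := fun i => lt_of_lt_of_le (hxpos i) (hL_ge i)
  have hMpos : ∀ i, 0 < M i := fun i =>
    lt_of_lt_of_le (mul_pos (inv_pos.2 hα0) (hxpos i)) (hM_ge i)
  -- both limits are fixed points, hence equal to xstar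
  have hLfix : g L = L :=
    yates_limit_fixed g hpos hmono hscal u hu_nonneg hu_rec L hLpos hu_tend
  have hMfix : g M = M :=
    yates_limit_fixed g hpos hmono hscal v hv_nonneg hv_rec M hMpos hv_tend
  have hLeq : L = xstar :=
    le_antisymm
      (yates_le_of_fixed g hpos hmono hscal L xstar (fun i => (hLpos i).le) hxstar hLfix hfix)
      (yates_le_of_fixed g hpos hmono hscal xstar L hxstar (fun i => (hLpos i).le) hfix hLfix)
  have hMeq : M = xstar :=
    le_antisymm
      (yates_le_of_fixed g hpos hmono hscal M xstar (fun i => (hMpos i).le) hxstar hMfix hfix)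
      (yates_le_of_fixed g hpos hmono hscal xstar M hxstar (fun i => (hMpos i).le) hfix hMfix)
  -- squeeze
  have hsq : ∀ n, v n ≤ g^[n + 1] p0 ∧ g^[n + 1] p0 ≤ u n := by
    intro n
    have e : g^[n + 1] p0 = g^[n] p1 := by
      rw [Function.iterate_succ_apply, hp1def]
    constructor
    · rw [e]
      exact hiter_mono n _ _ hαinvx_nonneg (fun i => by
        simpa [smul_eq_mul] using hlow i)
    · rw [e]
      exact hiter_mono n _ _ (fun i => (hp1pos i).le) (fun i => by
        simpa [smul_eq_mul] using hup i)
  rw [tendsto_pi_nhds]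
  intro i
  have hvx : Tendsto (fun n => v n i) atTop (nhds (xstar i)) := by
    have := hv_tend i; rwa [hMeq] at this
  have hux : Tendsto (fun n => u n i) atTop (nhds (xstar i)) := by
    have := hu_tend i; rwa [hLeq] at this
  have h1 : Tendsto (fun n => g^[n + 1] p0 i) atTop (nhds (xstar i)) :=
    tendsto_of_tendsto_of_tendsto_of_le_of_le hvx hux
      (fun n => (hsq n).1 i) (fun n => (hsq n).2 i)
  exact (tendsto_add_atTop_iff_nat 1).1 h1
end

section
/- Proposition (Belmega et al., diagonal strict concavity trace inequality). Let A, B, C, D be n×n positive definite Hermitian (or real symmetric) matrices with (A, C) ≠ (B, D), i.e., A ≠ B or C ≠ D. Set M = A − B, N = B⁻¹ − A⁻¹, P = C − D, and Q = (B + D)⁻¹ − (A + C)⁻¹. Then Tr(MN + PQ) > 0. -/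
open Matrix
open scoped MatrixOrder

variable {n : ℕ}

private lemma tr_ct_mul_self_nonneg (Z : Matrix (Fin n) (Fin n) ℝ) :
    0 ≤ (Zᴴ * Z).trace := by
  rw [Matrix.trace]
  refine Finset.sum_nonneg fun i _ => ?_
  simp only [Matrix.diag_apply, Matrix.mul_apply, Matrix.conjTranspose_apply, star_trivial]
  exact Finset.sum_nonneg fun j _ => mul_self_nonneg _

private lemma tr_ct_mul_self_pos {Z : Matrix (Fin n) (Fin n) ℝ} (hZ : Z ≠ 0) :
    0 < (Zᴴ * Z).trace := by
  obtain ⟨i, j, hij⟩ : ∃ i j, Z i j ≠ 0 := by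
    by_contra h; push_neg at h; exact hZ (Matrix.ext fun i j => h i j)
  rw [Matrix.trace]
  refine Finset.sum_pos' (fun k _ => ?_) ⟨j, Finset.mem_univ j, ?_⟩
  · simp only [Matrix.diag_apply, Matrix.mul_apply, Matrix.conjTranspose_apply, star_trivial]
    exact Finset.sum_nonneg fun l _ => mul_self_nonneg _
  · simp only [Matrix.diag_apply, Matrix.mul_apply, Matrix.conjTranspose_apply, star_trivial]
    refine Finset.sum_pos' (fun l _ => mul_self_nonneg _) ⟨i, Finset.mem_univ i, ?_⟩
    exact mul_self_pos.2 hij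

private lemma tr_quad_eq {S T U : Matrix (Fin n) (Fin n) ℝ}
    (hS : S.PosSemidef) (hT : T.PosSemidef) (hU : Uᴴ = U) :
    (U * S * U * T).trace
      = ((CFC.sqrt S * U * CFC.sqrt T)ᴴ * (CFC.sqrt S * U * CFC.sqrt T)).trace := by
  set R := CFC.sqrt S with hRdef
  set W := CFC.sqrt T with hWdef
  have hRh : Rᴴ = R := (CFC.sqrt_nonneg S).posSemidef.isHermitian
  have hWh : Wᴴ = W := (CFC.sqrt_nonneg T).posSemidef.isHermitian
  have hct : (R * U * W)ᴴ = W * U * R := by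
    simp only [Matrix.conjTranspose_mul, Matrix.mul_assoc, hRh, hWh, hU]
  rw [hct, ← show R * R = S from CFC.sqrt_mul_sqrt_self S hS.nonneg,
    ← show W * W = T from CFC.sqrt_mul_sqrt_self T hT.nonneg]
  rw [show W * U * R * (R * U * W) = W * (U * (R * R) * U * W) by
    simp only [Matrix.mul_assoc]]
  rw [Matrix.trace_mul_comm W]
  simp only [Matrix.mul_assoc]

private lemma tr_quad_nonneg {S T U : Matrix (Fin n) (Fin n) ℝ}
    (hS : S.PosSemidef) (hT : T.PosSemidef) (hU : Uᴴ = U) :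
    0 ≤ (U * S * U * T).trace := by
  rw [tr_quad_eq hS hT hU]
  · rw [Matrix.trace]
    refine Finset.sum_nonneg fun i _ => ?_
    simp only [Matrix.diag_apply, Matrix.mul_apply, Matrix.conjTranspose_apply, star_trivial]
    exact Finset.sum_nonneg fun j _ => mul_self_nonneg _

private lemma tr_quad_pos {S T U : Matrix (Fin n) (Fin n) ℝ}
    (hS : S.PosDef) (hT : T.PosDef) (hU : Uᴴ = U) (hU0 : U ≠ 0) :
    0 < (U * S * U * T).trace := by
  have hSp := hS.posSemidef
  have hTp := hT.posSemidef
  set R := CFC.sqrt S with hRdef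
  set W := CFC.sqrt T with hWdef
  have hRdet : IsUnit R.det := by
    have h1 : R * R = S := CFC.sqrt_mul_sqrt_self S hSp.nonneg
    have : R.det * R.det = S.det := by rw [← Matrix.det_mul, h1]
    refine isUnit_iff_ne_zero.2 fun h0 => ?_
    rw [h0, mul_zero] at this
    exact hS.det_pos.ne' this.symm
  have hWdet : IsUnit W.det := by
    have h1 : W * W = T := CFC.sqrt_mul_sqrt_self T hTp.nonneg
    have : W.det * W.det = T.det := by rw [← Matrix.det_mul, h1]
    refine isUnit_iff_ne_zero.2 fun h0 => ?_
    rw [h0, mul_zero] at this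
    exact hT.det_pos.ne' this.symm
  have hZ : R * U * W ≠ 0 := by
    intro h0
    apply hU0
    have : R⁻¹ * (R * U * W) * W⁻¹ = U := by
      rw [show R⁻¹ * (R * U * W) * W⁻¹ = (R⁻¹ * R) * U * (W * W⁻¹) by
        simp only [Matrix.mul_assoc]]
      rw [Matrix.nonsing_inv_mul R hRdet, Matrix.mul_nonsing_inv W hWdet,
        Matrix.one_mul, Matrix.mul_one]
    rw [← this, h0, Matrix.mul_zero, Matrix.zero_mul]
  rw [tr_quad_eq hSp hTp hU]
  exact tr_ct_mul_self_pos hZ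

private lemma inv_sub_inv'' {A B : Matrix (Fin n) (Fin n) ℝ}
    (hA : IsUnit A.det) (hB : IsUnit B.det) :
    B⁻¹ - A⁻¹ = A⁻¹ * (A - B) * B⁻¹ := by
  rw [Matrix.mul_sub, Matrix.sub_mul, Matrix.nonsing_inv_mul A hA,
    Matrix.mul_assoc A⁻¹ B B⁻¹, Matrix.mul_nonsing_inv B hB,
    Matrix.one_mul, Matrix.mul_one]

private lemma psd_inv_sub_inv {A C : Matrix (Fin n) (Fin n) ℝ}
    (hA : A.PosDef) (hC : C.PosDef) :
    (A⁻¹ - (A + C)⁻¹).PosSemidef := by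
  have hX : (A + C).PosDef := hA.add hC
  set X := A + C with hXdef
  have hAd : IsUnit A.det := isUnit_iff_ne_zero.2 hA.det_pos.ne'
  have hXd : IsUnit X.det := isUnit_iff_ne_zero.2 hX.det_pos.ne'
  have h1 : A⁻¹ - X⁻¹ = X⁻¹ * C * A⁻¹ := by
    rw [inv_sub_inv'' hXd hAd, hXdef, add_sub_cancel_left]
  have h2 : C * A⁻¹ * X = C + C * A⁻¹ * C := by
    rw [hXdef, Matrix.mul_add, Matrix.mul_assoc C A⁻¹ A,
      Matrix.nonsing_inv_mul A hAd, Matrix.mul_one]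
  have key : A⁻¹ - X⁻¹ = X⁻¹ᴴ * (C + C * A⁻¹ * C) * X⁻¹ := by
    rw [hX.inv.isHermitian, h1, ← h2]
    rw [show X⁻¹ * (C * A⁻¹ * X) * X⁻¹ = X⁻¹ * (C * A⁻¹) * (X * X⁻¹) by
      simp only [Matrix.mul_assoc]]
    rw [Matrix.mul_nonsing_inv X hXd, Matrix.mul_one, Matrix.mul_assoc]
  rw [key]
  refine Matrix.PosSemidef.conjTranspose_mul_mul_same ?_ X⁻¹
  refine hC.posSemidef.add ?_
  have := hA.inv.posSemidef.conjTranspose_mul_mul_same C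
  rwa [hC.isHermitian] at this

private lemma trace_decomp (M P S1 T1 S T : Matrix (Fin n) (Fin n) ℝ)
    (hsymm : (M * (S * (P * T))).trace = (P * (S * (M * T))).trace) :
    (M * (S1 * M * T1) + P * (S * (M + P) * T)).trace
      = (M * (S1 - S) * M * T1).trace + (M * S * M * (T1 - T)).trace
        + ((M + (2⁻¹:ℝ) • P) * S * (M + (2⁻¹:ℝ) • P) * T).trace
        + (3/4) * (P * S * P * T).trace := by
  simp only [Matrix.mul_sub, Matrix.sub_mul, Matrix.mul_add, Matrix.add_mul,
    Matrix.smul_mul, Matrix.mul_smul, Matrix.trace_add, Matrix.trace_sub,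
    Matrix.trace_smul, smul_eq_mul, Matrix.mul_assoc]
  rw [hsymm]
  ring

/-- **Belmega et al., diagonal strict concavity trace inequality.** For `n × n` positive
definite (real symmetric) matrices `A, B, C, D` with `A ≠ B` or `C ≠ D`, setting
`M = A − B`, `N = B⁻¹ − A⁻¹`, `P = C − D` and `Q = (B + D)⁻¹ − (A + C)⁻¹`, one has
`Tr(M N + P Q) > 0`. -/
theorem belmega_dsc_trace_inequality
    {n : ℕ} (A B C D : Matrix (Fin n) (Fin n) ℝ)
    (hA : A.PosDef) (hB : B.PosDef) (hC : C.PosDef) (hD : D.PosDef)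
    (hne : A ≠ B ∨ C ≠ D) :
    0 < Matrix.trace
      ((A - B) * (B⁻¹ - A⁻¹) + (C - D) * ((B + D)⁻¹ - (A + C)⁻¹)) := by
  have hX : (A + C).PosDef := hA.add hC
  have hY : (B + D).PosDef := hB.add hD
  have hAd : IsUnit A.det := isUnit_iff_ne_zero.2 hA.det_pos.ne'
  have hBd : IsUnit B.det := isUnit_iff_ne_zero.2 hB.det_pos.ne'
  have hXd : IsUnit (A + C).det := isUnit_iff_ne_zero.2 hX.det_pos.ne'
  have hYd : IsUnit (B + D).det := isUnit_iff_ne_zero.2 hY.det_pos.ne'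
  -- rewrite the differences of inverses
  rw [inv_sub_inv'' hAd hBd, inv_sub_inv'' hXd hYd,
    show A + C - (B + D) = (A - B) + (C - D) by abel]
  set M : Matrix (Fin n) (Fin n) ℝ := A - B with hMdef
  set P : Matrix (Fin n) (Fin n) ℝ := C - D with hPdef
  set S : Matrix (Fin n) (Fin n) ℝ := (A + C)⁻¹ with hSdef
  set T : Matrix (Fin n) (Fin n) ℝ := (B + D)⁻¹ with hTdef
  -- hermitian/transpose facts
  have hMh : Mᴴ = M := by
    rw [hMdef, Matrix.conjTranspose_sub, hA.isHermitian, hB.isHermitian]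
  have hPh : Pᴴ = P := by
    rw [hPdef, Matrix.conjTranspose_sub, hC.isHermitian, hD.isHermitian]
  have hSh : Sᴴ = S := hX.inv.isHermitian
  have hTh : Tᴴ = T := hY.inv.isHermitian
  have hMt : Mᵀ = M := by rw [← Matrix.conjTranspose_eq_transpose_of_trivial, hMh]
  have hPt : Pᵀ = P := by rw [← Matrix.conjTranspose_eq_transpose_of_trivial, hPh]
  have hSt : Sᵀ = S := by rw [← Matrix.conjTranspose_eq_transpose_of_trivial, hSh]
  have hTt : Tᵀ = T := by rw [← Matrix.conjTranspose_eq_transpose_of_trivial, hTh]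
  -- symmetry of the cross term
  have hsymm : (M * (S * (P * T))).trace = (P * (S * (M * T))).trace := by
    rw [← Matrix.trace_transpose (M * (S * (P * T)))]
    simp only [Matrix.transpose_mul, hMt, hPt, hSt, hTt]
    rw [show T * P * S * M = T * (P * (S * M)) by simp only [Matrix.mul_assoc]]
    rw [Matrix.trace_mul_comm]
    simp only [Matrix.mul_assoc]
  rw [trace_decomp M P A⁻¹ B⁻¹ S T hsymm]
  -- positivity of the four pieces
  have hpsd1 : (A⁻¹ - S).PosSemidef := psd_inv_sub_inv hA hC
  have hpsd2 : (B⁻¹ - T).PosSemidef := psd_inv_sub_inv hB hD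
  have t1 : 0 ≤ (M * (A⁻¹ - S) * M * B⁻¹).trace :=
    tr_quad_nonneg hpsd1 hB.inv.posSemidef hMh
  have t2 : 0 ≤ (M * S * M * (B⁻¹ - T)).trace :=
    tr_quad_nonneg hX.inv.posSemidef hpsd2 hMh
  have hWh : (M + (2⁻¹:ℝ) • P)ᴴ = M + (2⁻¹:ℝ) • P := by
    rw [Matrix.conjTranspose_add, Matrix.conjTranspose_smul, hMh, hPh, star_trivial]
  have t3 : 0 ≤ ((M + (2⁻¹:ℝ) • P) * S * (M + (2⁻¹:ℝ) • P) * T).trace :=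
    tr_quad_nonneg hX.inv.posSemidef hY.inv.posSemidef hWh
  have t4 : 0 ≤ (P * S * P * T).trace :=
    tr_quad_nonneg hX.inv.posSemidef hY.inv.posSemidef hPh
  by_cases hP : P = 0
  · -- then M ≠ 0 and W = M
    have hM0 : M ≠ 0 := by
      rcases hne with h | h
      · exact fun h0 => h (sub_eq_zero.mp h0)
      · exact absurd (sub_eq_zero.mp hP) h
    have hW0 : M + (2⁻¹:ℝ) • P ≠ 0 := by
      rw [hP, smul_zero, add_zero]; exact hM0
    have t3' : 0 < ((M + (2⁻¹:ℝ) • P) * S * (M + (2⁻¹:ℝ) • P) * T).trace :=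
      tr_quad_pos hX.inv hY.inv hWh hW0
    nlinarith [t1, t2, t3', t4]
  · have t4' : 0 < (P * S * P * T).trace :=
      tr_quad_pos hX.inv hY.inv hPh hP
    nlinarith [t1, t2, t3, t4']
end
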